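/- arXiv:2002.06858 — 6 statements merged into one kernel-verified Lean document; each statement's English description precedes it below -/
import Mathlib

section
/- Let α ∈ (0,1] and β = √(1−α²). Suppose f : ℝ → ℝ³ is twice continuously differentiable, satisfies |f(x)| = 1 for all x ∈ ℝ, and solves the shrinker-profile equation α f''(x) + α|f'(x)|² f(x) + β (f × f')'(x) − (x/2) f'(x) = 0 for all x ∈ ℝ. Then there exists a constant c ≥ 0 such that |f'(x)| = c·e^{α x²/4} for all x ∈ ℝ. -/
/-!
Since `|f| = 1`, `f' ⊥ f`. Pairing the profile equation with `f'` and with `f × f'`, and using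
Lagrange's identity `⟪f × f'', f × f'⟫ = ⟪f', f''⟫`, gives two linear relations between
`⟪f', f''⟫` and `⟪f × f'', f'⟫`; eliminating the latter with `α² + β² = 1` leaves
`⟪f', f''⟫ = (α x / 2) |f'|²`. Hence `g = |f'|²` solves `g' = α x g`, so
`g = g(0) e^{α x² / 2}`.
-/

noncomputable section

open Real

abbrev E3 := EuclideanSpace ℝ (Fin 3)

/-- The usual cross product on `ℝ³`. -/
def cross3 (u v : E3) : E3 :=
  (WithLp.equiv 2 (Fin 3 → ℝ)).symm
    ![u 1 * v 2 - u 2 * v 1, u 2 * v 0 - u 0 * v 2, u 0 * v 1 - u 1 * v 0]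

open Matrix WithLp

lemma cross3_eq_toLp_crossProduct (u v : E3) : cross3 u v = toLp 2 (ofLp u ⨯₃ ofLp v) := rfl

lemma inner_cross3_eq_dotProduct (u v w : E3) :
    inner ℝ (cross3 u v) w = ofLp w ⬝ᵥ ofLp u ⨯₃ ofLp v := rfl

lemma cross3_self (u : E3) : cross3 u u = 0 := by
  simp [cross3_eq_toLp_crossProduct, cross_self]

lemma inner_cross3_self_left (u v : E3) : inner ℝ (cross3 u v) u = 0 := by
  simp only [inner_cross3_eq_dotProduct, dot_self_cross]

lemma inner_cross3_self_right (u v : E3) : inner ℝ (cross3 u v) v = 0 := by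
  simp only [inner_cross3_eq_dotProduct, dot_cross_self]

lemma inner_cross3_swap (u v w : E3) : inner ℝ (cross3 u v) w = -inner ℝ (cross3 u w) v := by
  simp only [inner_cross3_eq_dotProduct]
  rw [triple_product_permutation, triple_product_permutation, ← cross_anticomm, dotProduct_neg]

lemma inner_cross3_cross3 (u v w x : E3) :
    inner ℝ (cross3 u v) (cross3 w x) =
      inner ℝ u w * inner ℝ v x - inner ℝ u x * inner ℝ v w := by
  simp only [cross3_eq_toLp_crossProduct, EuclideanSpace.inner_eq_star_dotProduct, star_trivial]
  rw [dotProduct_comm, cross_dot_cross]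
  simp only [dotProduct_comm]

def cross3CLM : E3 →L[ℝ] E3 →L[ℝ] E3 :=
  LinearMap.toContinuousLinearMap
    (LinearMap.toContinuousLinearMap.toLinearMap ∘ₗ
      ((crossProduct.compl₁₂ (WithLp.linearEquiv 2 ℝ (Fin 3 → ℝ)).toLinearMap
        (WithLp.linearEquiv 2 ℝ (Fin 3 → ℝ)).toLinearMap).compr₂
        (WithLp.linearEquiv 2 ℝ (Fin 3 → ℝ)).symm.toLinearMap))

lemma HasDerivAt.cross3 {f g : ℝ → E3} {f' g' : E3} {x : ℝ}
    (hf : HasDerivAt f f' x) (hg : HasDerivAt g g' x) :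
    HasDerivAt (fun y => cross3 (f y) (g y)) (cross3 (f x) g' + cross3 f' (g x)) x :=
  cross3CLM.hasDerivAt_of_bilinear (fun _ => hf) (fun _ => hg)

lemma inner_eq_zero_of_norm_eq_const {F : Type*} [NormedAddCommGroup F] [InnerProductSpace ℝ F]
    {f : ℝ → F} {f' : F} {x r : ℝ} (hf : HasDerivAt f f' x) (hr : ∀ y, ‖f y‖ = r) :
    inner ℝ (f x) f' = 0 := by
  have hconst : (‖f ·‖ ^ 2) = fun _ => r ^ 2 := funext fun y => by rw [hr y]
  have := hf.norm_sq.unique (hconst ▸ hasDerivAt_const x (r ^ 2))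
  linarith

lemma eq_mul_exp_of_hasDerivAt {g : ℝ → ℝ} {a : ℝ} (hg : ∀ x, HasDerivAt g (a * x * g x) x)
    (x : ℝ) : g x = g 0 * exp (a * x ^ 2 / 2) := by
  have hderiv : ∀ y, HasDerivAt (fun y => g y * exp (-(a * y ^ 2 / 2))) 0 y := fun y => by
    have hp : HasDerivAt (fun y : ℝ => -(a * y ^ 2 / 2)) (-(a * y)) y := by
      refine (((hasDerivAt_pow 2 y).const_mul a).div_const 2).neg.congr_deriv ?_
      push_cast
      ring
    refine ((hg y).mul hp.exp).congr_deriv ?_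
    ring
  have hconst := is_const_of_deriv_eq_zero (fun y => (hderiv y).differentiableAt)
    (fun y => (hderiv y).deriv) x 0
  calc g x = g x * exp (-(a * x ^ 2 / 2)) * exp (a * x ^ 2 / 2) := by
        rw [mul_assoc, ← exp_add, neg_add_cancel, exp_zero, mul_one]
    _ = g 0 * exp (a * x ^ 2 / 2) := by simp [hconst]

lemma inner_eq_of_shrinker_profile {a b t : ℝ} (hab : a ^ 2 + b ^ 2 = 1) {u v w : E3}
    (hu : ‖u‖ = 1) (huv : inner ℝ u v = 0)
    (h : a • w + (a * ‖v‖ ^ 2) • u + b • cross3 u w - t • v = 0) :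
    inner ℝ v w = a * t * ‖v‖ ^ 2 := by
  have hv := congrArg (inner ℝ · v) h
  have hc := congrArg (inner ℝ · (cross3 u v)) h
  simp only [inner_add_left, inner_sub_left, inner_smul_left, inner_zero_left,
    RCLike.conj_to_real] at hv hc
  have hwuv : inner ℝ w (cross3 u v) = -inner ℝ (cross3 u w) v := by
    rw [real_inner_comm, inner_cross3_swap]
  have huuv : inner ℝ u (cross3 u v) = 0 := by rw [real_inner_comm, inner_cross3_self_left]
  have hvuv : inner ℝ v (cross3 u v) = 0 := by rw [real_inner_comm, inner_cross3_self_right]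
  have hlagrange : inner ℝ (cross3 u w) (cross3 u v) = inner ℝ v w := by
    rw [inner_cross3_cross3, real_inner_self_eq_norm_sq, hu, huv, real_inner_comm w v]; ring
  rw [huv, real_inner_self_eq_norm_sq, real_inner_comm v w] at hv
  rw [hwuv, huuv, hvuv, hlagrange] at hc
  linear_combination a * hv + b * hc - inner ℝ v w * hab

theorem stmt0 (α β : ℝ) (hα : α ∈ Set.Ioc (0 : ℝ) 1) (hβ : β = Real.sqrt (1 - α ^ 2))
    (f : ℝ → E3) (hf : ContDiff ℝ 2 f) (hunit : ∀ x : ℝ, ‖f x‖ = 1)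
    (heq : ∀ x : ℝ,
      α • deriv (deriv f) x + (α * ‖deriv f x‖ ^ 2) • f x
        + β • deriv (fun y => cross3 (f y) (deriv f y)) x - (x / 2) • deriv f x = 0) :
    ∃ c : ℝ, 0 ≤ c ∧ ∀ x : ℝ, ‖deriv f x‖ = c * Real.exp (α * x ^ 2 / 4) := by
  have hαβ : α ^ 2 + β ^ 2 = 1 := by
    rw [hβ, sq_sqrt (by nlinarith [hα.1, hα.2])]; ring
  have hf' x : HasDerivAt f (deriv f x) x := (hf.differentiable two_ne_zero x).hasDerivAt
  have hf'' x : HasDerivAt (deriv f) (deriv (deriv f) x) x :=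
    (hf.differentiable_deriv_two x).hasDerivAt
  have hspeed x : HasDerivAt (‖deriv f ·‖ ^ 2) (α * x * ‖deriv f x‖ ^ 2) x := by
    have hcross : deriv (fun y => cross3 (f y) (deriv f y)) x =
        cross3 (f x) (deriv (deriv f) x) := by
      simpa [cross3_self] using ((hf' x).cross3 (hf'' x)).deriv
    have hinner := inner_eq_of_shrinker_profile hαβ (hunit x)
      (inner_eq_zero_of_norm_eq_const (hf' x) hunit) (hcross ▸ heq x)
    refine (hf'' x).norm_sq.congr_deriv ?_
    rw [hinner]; ring
  refine ⟨‖deriv f 0‖, norm_nonneg _, fun x => ?_⟩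
  refine (sq_eq_sq₀ (norm_nonneg _) (by positivity)).mp ?_
  rw [eq_mul_exp_of_hasDerivAt hspeed x, mul_pow, ← exp_nat_mul]
  ring_nf
end
end

section
/- Fix α ∈ (0,1], β = √(1−α²) and c > 0. Let (m, n, b) : ℝ → ℝ³ × ℝ³ × ℝ³ solve the Serret–Frenet system m' = k n, n' = −k m + τ b, b' = −τ n with k(x) = c·e^{α x²/4}, τ(x) = −βx/2, and initial conditions m(0) = (1,0,0), n(0) = (0,1,0), b(0) = (0,0,1). Write m = (m₁, m₂, m₃). Then m₁ is even and m₂ and m₃ are odd: for all x ∈ ℝ, m₁(−x) = m₁(x), m₂(−x) = −m₂(x), and m₃(−x) = −m₃(x). -/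
noncomputable section

open Real

/-! The curvature `c e^{αx²/4}` is even and the torsion `-βx/2` is odd, so reversing time and
applying `R = diag(1,-1,-1)` to `m` and `-R` to `n` and `b` maps solutions of the Serret–Frenet
system to solutions. The initial frame is fixed by this symmetry, so uniqueness for linear ODEs
with continuous coefficients shows that the solution itself is. -/

theorem ODE_solution_unique_univ_of_linear {E : Type*} [NormedAddCommGroup E] [NormedSpace ℝ E]
    {A : ℝ → E →L[ℝ] E} (hA : Continuous A) {f g : ℝ → E} {t₀ : ℝ}
    (hf : ∀ t, HasDerivAt f (A t (f t)) t) (hg : ∀ t, HasDerivAt g (A t (g t)) t)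
    (heq : f t₀ = g t₀) : f = g := by
  ext t
  obtain ⟨a, b, ht, ht₀⟩ : ∃ a b, t ∈ Set.Ioo a b ∧ t₀ ∈ Set.Ioo a b :=
    ⟨min t t₀ - 1, max t t₀ + 1, by constructor <;> constructor <;> grind⟩
  obtain ⟨C, hC⟩ :=
    (isCompact_Icc (a := a) (b := b)).exists_bound_of_continuousOn hA.continuousOn
  have hLip : ∀ s ∈ Set.Ioo a b, LipschitzOnWith C.toNNReal (A s) Set.univ := fun s hs =>
    ((A s).lipschitz.weaken (by
      rw [← NNReal.coe_le_coe, coe_nnnorm, Real.coe_toNNReal']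
      exact (hC s (Set.Ioo_subset_Icc_self hs)).trans (le_max_left _ _))).lipschitzOnWith
  exact ODE_solution_unique_of_mem_Ioo hLip ht₀ (fun s _ => ⟨hf s, Set.mem_univ _⟩)
    (fun s _ => ⟨hg s, Set.mem_univ _⟩) heq ht

section Frenet

variable {E : Type*} [NormedAddCommGroup E] [NormedSpace ℝ E]

open ContinuousLinearMap in
/-- The Serret–Frenet system of a frame `y = (m, n, b)` is `y' = frenetOp κ τ y`. -/
def frenetOp (κ τ : ℝ) : E × E × E →L[ℝ] E × E × E :=
  κ • (fst ℝ E E ∘L snd ℝ E (E × E)).prod ((-fst ℝ E (E × E)).prod 0) +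
  τ • (0 : E × E × E →L[ℝ] E).prod
    ((snd ℝ E E ∘L snd ℝ E (E × E)).prod (-(fst ℝ E E ∘L snd ℝ E (E × E))))

@[simp]
theorem frenetOp_apply (κ τ : ℝ) (y : E × E × E) :
    frenetOp κ τ y = (κ • y.2.1, -(κ • y.1) + τ • y.2.2, -(τ • y.2.1)) := by
  simp [frenetOp]

theorem Continuous.frenetOp {κ τ : ℝ → ℝ} (hκ : Continuous κ) (hτ : Continuous τ) :
    Continuous fun t => (frenetOp (κ t) (τ t) : E × E × E →L[ℝ] E × E × E) := by
  unfold _root_.frenetOp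
  fun_prop

def frenetFlip (R : E →L[ℝ] E) : E × E × E →L[ℝ] E × E × E :=
  R.prodMap ((-R).prodMap (-R))

@[simp]
theorem frenetFlip_apply (R : E →L[ℝ] E) (y : E × E × E) :
    frenetFlip R y = (R y.1, -R y.2.1, -R y.2.2) := rfl

theorem frenetFlip_frenetOp_neg (R : E →L[ℝ] E) (κ τ : ℝ) (y : E × E × E) :
    frenetFlip R (frenetOp κ (-τ) y) = -frenetOp κ τ (frenetFlip R y) := by
  simp only [frenetFlip_apply, frenetOp_apply, map_add, map_neg, map_smul, Prod.neg_mk,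
    Prod.mk.injEq]
  refine ⟨?_, ?_, ?_⟩ <;> module

variable {κ τ : ℝ → ℝ} {y : ℝ → E × E × E}

theorem hasDerivAt_frenetFlip_comp_neg (R : E →L[ℝ] E) (hκ : ∀ t, κ (-t) = κ t)
    (hτ : ∀ t, τ (-t) = -τ t) (hy : ∀ t, HasDerivAt y (frenetOp (κ t) (τ t) (y t)) t)
    (t : ℝ) : HasDerivAt (fun s => frenetFlip R (y (-s)))
      (frenetOp (κ t) (τ t) (frenetFlip R (y (-t)))) t := by
  have h := (frenetFlip R).hasFDerivAt.comp_hasDerivAt t ((hy (-t)).scomp t (hasDerivAt_neg t))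
  rwa [hκ, hτ, neg_one_smul, map_neg, frenetFlip_frenetOp_neg, neg_neg] at h

theorem frenetFlip_apply_neg_eq_of_hasDerivAt (R : E →L[ℝ] E) (hκc : Continuous κ)
    (hτc : Continuous τ) (hκ : ∀ t, κ (-t) = κ t) (hτ : ∀ t, τ (-t) = -τ t)
    (hy : ∀ t, HasDerivAt y (frenetOp (κ t) (τ t) (y t)) t) (hy0 : frenetFlip R (y 0) = y 0)
    (t : ℝ) : frenetFlip R (y (-t)) = y t :=
  congrFun (ODE_solution_unique_univ_of_linear (hκc.frenetOp hτc)
    (hasDerivAt_frenetFlip_comp_neg R hκ hτ hy) hy (t₀ := 0) (by simpa using hy0)) t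

end Frenet

def diagFlip : E3 →L[ℝ] E3 :=
  LinearMap.toContinuousLinearMap (Matrix.toEuclideanLin (Matrix.diagonal ![1, -1, -1]))

@[simp]
theorem diagFlip_apply (v : E3) (i : Fin 3) : diagFlip v i = ![1, -1, -1] i * v i := by
  simp [diagFlip, Matrix.mulVec_diagonal]

theorem stmt5_general (α β c : ℝ) (m n b : ℝ → E3)
    (hmdiff : Differentiable ℝ m) (hndiff : Differentiable ℝ n) (hbdiff : Differentiable ℝ b)
    (hm : ∀ x : ℝ, deriv m x = (c * Real.exp (α * x ^ 2 / 4)) • n x)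
    (hn : ∀ x : ℝ, deriv n x
      = -((c * Real.exp (α * x ^ 2 / 4)) • m x) + (-(β * x / 2)) • b x)
    (hb : ∀ x : ℝ, deriv b x = -((-(β * x / 2)) • n x))
    (hm0 : m 0 = EuclideanSpace.single (0 : Fin 3) (1 : ℝ))
    (hn0 : n 0 = EuclideanSpace.single (1 : Fin 3) (1 : ℝ))
    (hb0 : b 0 = EuclideanSpace.single (2 : Fin 3) (1 : ℝ)) :
    ∀ x : ℝ, m (-x) 0 = m x 0 ∧ m (-x) 1 = -(m x 1) ∧ m (-x) 2 = -(m x 2) := by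
  intro x
  have hsol : ∀ t, HasDerivAt (fun s => (m s, n s, b s))
      (frenetOp (c * Real.exp (α * t ^ 2 / 4)) (-(β * t / 2)) (m t, n t, b t)) t := fun t => by
    rw [frenetOp_apply, ← hm, ← hn, ← hb]
    exact (hmdiff t).hasDerivAt.prodMk ((hndiff t).hasDerivAt.prodMk (hbdiff t).hasDerivAt)
  have hflip0 : frenetFlip diagFlip (m 0, n 0, b 0) = (m 0, n 0, b 0) := by
    simp only [frenetFlip_apply, hm0, hn0, hb0, Prod.mk.injEq]
    refine ⟨?_, ?_, ?_⟩ <;> ext i <;> fin_cases i <;> simp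
  have h : diagFlip (m (-x)) = m x := congrArg Prod.fst <|
    frenetFlip_apply_neg_eq_of_hasDerivAt diagFlip (by fun_prop) (by fun_prop)
      (fun t => by rw [neg_sq]) (fun t => by ring) hsol hflip0 x
  have hcoord (i : Fin 3) : ![1, -1, -1] i * m (-x) i = m x i := by
    rw [← diagFlip_apply, h]
  refine ⟨?_, ?_, ?_⟩ <;> simp [← hcoord]

theorem stmt5 (α β c : ℝ) (hα : α ∈ Set.Ioc (0 : ℝ) 1) (hβ : β = Real.sqrt (1 - α ^ 2))
    (hc : 0 < c) (m n b : ℝ → E3)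
    (hmdiff : Differentiable ℝ m) (hndiff : Differentiable ℝ n) (hbdiff : Differentiable ℝ b)
    (hm : ∀ x : ℝ, deriv m x = (c * Real.exp (α * x ^ 2 / 4)) • n x)
    (hn : ∀ x : ℝ, deriv n x
      = -((c * Real.exp (α * x ^ 2 / 4)) • m x) + (-(β * x / 2)) • b x)
    (hb : ∀ x : ℝ, deriv b x = -((-(β * x / 2)) • n x))
    (hm0 : m 0 = EuclideanSpace.single (0 : Fin 3) (1 : ℝ))
    (hn0 : n 0 = EuclideanSpace.single (1 : Fin 3) (1 : ℝ))
    (hb0 : b 0 = EuclideanSpace.single (2 : Fin 3) (1 : ℝ)) :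
    ∀ x : ℝ, m (-x) 0 = m x 0 ∧ m (-x) 1 = -(m x 1) ∧ m (-x) 2 = -(m x 2) :=
  stmt5_general α β c m n b hmdiff hndiff hbdiff hm hn hb hm0 hn0 hb0
end
end

section
/- Fix α ∈ (0,1], β = √(1−α²), c > 0 and T ∈ ℝ. Let (m, n, b) solve the Serret–Frenet system m' = k n, n' = −k m + τ b, b' = −τ n with k(x) = c·e^{α x²/4}, τ(x) = −βx/2, and initial conditions m(0) = (1,0,0), n(0) = (0,1,0), b(0) = (0,0,1), and write m = (m₁,m₂,m₃), n = (n₁,n₂,n₃). For j ∈ {1,2,3} the limit W_j := lim_{x→∞} e^{i c Φ_α(x)} (m_j(x) + i n_j(x)) exists in ℂ; write W_j = ρ_j e^{i φ_j} with ρ_j ≥ 0. Set ρ_j⁻ = ρ_j for j = 1 and ρ_j⁻ = −ρ_j for j ∈ {2,3}. Then for every x > 0 and j ∈ {1,2,3}, lim_{t→T⁻} [ m_j(x/√(T−t)) − ρ_j cos(c Φ_α(x/√(T−t)) − φ_j) ] = 0, and for every x < 0 and j ∈ {1,2,3}, lim_{t→T⁻} [ m_j(x/√(T−t)) − ρ_j⁻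 cos(c Φ_α(−x/√(T−t)) − φ_j) ] = 0. -/
noncomputable section

open Real MeasureTheory Filter

/-- `Φ_α(x) = ∫₀ˣ e^{α s²/4} ds`. -/
def Phi (α x : ℝ) : ℝ := ∫ s in (0 : ℝ)..x, Real.exp (α * s ^ 2 / 4)

/-!
Each coordinate `(m_j, n_j, b_j)` solves the scalar Serret–Frenet system, whose energy
`m_j² + n_j² + b_j²` is conserved, so `n_j` and `b_j` stay bounded. The phase
`f = e^{i c Φ_α}(m_j + i n_j)` satisfies `f' = i τ e^{i c Φ_α} b_j`, which is not integrable;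
but `f - p e^{i c Φ_α} b_j` with `p = τ / k = O(x e^{-α x² / 4})` has derivative
`O(x² e^{-α x² / 4})`, so `f` converges to some `W_j = ρ_j e^{i φ_j}`. Taking real parts,
`m_j(y) - ρ_j cos(c Φ_α(y) - φ_j) → 0` as `y → ∞`, and `y = x / √(T - t) → ∞` as `t → T⁻`
when `x > 0`. For `x < 0`: `k` is even and `τ` is odd, so `x ↦ (m(-x), -n(-x), -b(-x))` solves
the same system, and `m(x) = diag(1, -1, -1) m(-x)` by uniqueness (the energy of the difference
of two solutions is conserved).
-/

structure IsFrenetFrame {E : Type*} [NormedAddCommGroup E] [NormedSpace ℝ E]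
    (k τ : ℝ → ℝ) (m n b : ℝ → E) : Prop where
  hasDerivAt_tangent : ∀ x, HasDerivAt m (k x • n x) x
  hasDerivAt_normal : ∀ x, HasDerivAt n (-(k x • m x) + τ x • b x) x
  hasDerivAt_binormal : ∀ x, HasDerivAt b (-(τ x • n x)) x

namespace IsFrenetFrame

section NormedSpace

variable {E F : Type*} [NormedAddCommGroup E] [NormedSpace ℝ E] [NormedAddCommGroup F]
  [NormedSpace ℝ F] {k τ : ℝ → ℝ} {m n b : ℝ → E}

theorem map (h : IsFrenetFrame k τ m n b) (L : E →L[ℝ] F) :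
    IsFrenetFrame k τ (fun x => L (m x)) (fun x => L (n x)) (fun x => L (b x)) where
  hasDerivAt_tangent x := by
    simpa [Function.comp_def] using L.hasFDerivAt.comp_hasDerivAt x (h.hasDerivAt_tangent x)
  hasDerivAt_normal x := by
    simpa [Function.comp_def] using L.hasFDerivAt.comp_hasDerivAt x (h.hasDerivAt_normal x)
  hasDerivAt_binormal x := by
    simpa [Function.comp_def] using L.hasFDerivAt.comp_hasDerivAt x (h.hasDerivAt_binormal x)

theorem sub {m' n' b' : ℝ → E} (h : IsFrenetFrame k τ m n b) (h' : IsFrenetFrame k τ m' n' b') :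
    IsFrenetFrame k τ (m - m') (n - n') (b - b') where
  hasDerivAt_tangent x := by
    simpa [smul_sub] using (h.hasDerivAt_tangent x).sub (h'.hasDerivAt_tangent x)
  hasDerivAt_normal x := by
    convert (h.hasDerivAt_normal x).sub (h'.hasDerivAt_normal x) using 1
    simp only [Pi.sub_apply, smul_sub]
    abel
  hasDerivAt_binormal x := by
    simpa [smul_sub, sub_eq_add_neg, add_comm] using
      (h.hasDerivAt_binormal x).sub (h'.hasDerivAt_binormal x)

theorem comp_neg (h : IsFrenetFrame k τ m n b) (hk : ∀ x, k (-x) = k x)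
    (hτ : ∀ x, τ (-x) = -τ x) :
    IsFrenetFrame k τ (fun x => m (-x)) (fun x => -n (-x)) (fun x => -b (-x)) where
  hasDerivAt_tangent x := by
    simpa [hk, Function.comp_def] using
      (h.hasDerivAt_tangent (-x)).scomp x (hasDerivAt_neg x)
  hasDerivAt_normal x := ((h.hasDerivAt_normal (-x)).scomp x (hasDerivAt_neg x)).neg.congr_deriv
    (by rw [hk, hτ]; module)
  hasDerivAt_binormal x :=
    ((h.hasDerivAt_binormal (-x)).scomp x (hasDerivAt_neg x)).neg.congr_deriv (by rw [hτ]; module)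

end NormedSpace

section InnerProductSpace

variable {E : Type*} [NormedAddCommGroup E] [InnerProductSpace ℝ E] {k τ : ℝ → ℝ}
  {m n b : ℝ → E}

theorem energy_eq (h : IsFrenetFrame k τ m n b) (x : ℝ) :
    ‖m x‖ ^ 2 + ‖n x‖ ^ 2 + ‖b x‖ ^ 2 = ‖m 0‖ ^ 2 + ‖n 0‖ ^ 2 + ‖b 0‖ ^ 2 := by
  have hderiv (y : ℝ) : HasDerivAt (fun y => ‖m y‖ ^ 2 + ‖n y‖ ^ 2 + ‖b y‖ ^ 2) 0 y := by
    refine (((h.hasDerivAt_tangent y).norm_sq.add (h.hasDerivAt_normal y).norm_sq).add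
      (h.hasDerivAt_binormal y).norm_sq).congr_deriv ?_
    simp only [inner_add_right, inner_neg_right, real_inner_smul_right,
      real_inner_comm (m y) (n y), real_inner_comm (n y) (b y)]
    ring
  exact is_const_of_deriv_eq_zero (fun y => (hderiv y).differentiableAt)
    (fun y => (hderiv y).deriv) x 0

theorem norm_normal_le (h : IsFrenetFrame k τ m n b) (x : ℝ) :
    ‖n x‖ ≤ √(‖m 0‖ ^ 2 + ‖n 0‖ ^ 2 + ‖b 0‖ ^ 2) := by
  refine Real.le_sqrt_of_sq_le ?_
  nlinarith [h.energy_eq x, sq_nonneg ‖m x‖, sq_nonneg ‖b x‖]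

theorem norm_binormal_le (h : IsFrenetFrame k τ m n b) (x : ℝ) :
    ‖b x‖ ≤ √(‖m 0‖ ^ 2 + ‖n 0‖ ^ 2 + ‖b 0‖ ^ 2) := by
  refine Real.le_sqrt_of_sq_le ?_
  nlinarith [h.energy_eq x, sq_nonneg ‖m x‖, sq_nonneg ‖n x‖]

theorem tangent_eq {m' n' b' : ℝ → E} (h : IsFrenetFrame k τ m n b)
    (h' : IsFrenetFrame k τ m' n' b') (hm : m 0 = m' 0) (hn : n 0 = n' 0) (hb : b 0 = b' 0) :
    m = m' := by
  funext x
  have := (h.sub h').energy_eq x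
  simp only [Pi.sub_apply, hm, hn, hb, sub_self, norm_zero] at this
  rw [← sub_eq_zero, ← norm_eq_zero]
  nlinarith [sq_nonneg ‖m x - m' x‖, sq_nonneg ‖n x - n' x‖, sq_nonneg ‖b x - b' x‖]

theorem tangent_eq_comp_neg (h : IsFrenetFrame k τ m n b) (hk : ∀ x, k (-x) = k x)
    (hτ : ∀ x, τ (-x) = -τ x) (S : E →L[ℝ] E) (hm : S (m 0) = m 0) (hn : S (n 0) = -n 0)
    (hb : S (b 0) = -b 0) (x : ℝ) : m x = S (m (-x)) := by
  have hS := (h.comp_neg hk hτ).map S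
  refine congrFun (h.tangent_eq hS ?_ ?_ ?_) x <;> simp [hm, hn, hb]

end InnerProductSpace

open Complex in
theorem hasDerivAt_exp_mul {k τ θ : ℝ → ℝ} {m n b : ℝ → ℝ} (h : IsFrenetFrame k τ m n b)
    (hθ : ∀ x, HasDerivAt θ (k x) x) (x : ℝ) :
    HasDerivAt (fun x => exp (I * θ x) * (m x + I * n x))
      (I * τ x * exp (I * θ x) * b x) x := by
  have hexp := ((hθ x).ofReal_comp.const_mul I).cexp
  refine (hexp.mul ((h.hasDerivAt_tangent x).ofReal_comp.add
    ((h.hasDerivAt_normal x).ofReal_comp.const_mul I))).congr_deriv ?_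
  simp only [smul_eq_mul, Pi.add_apply]
  push_cast
  linear_combination k x * exp (I * θ x) * n x * I_mul_I

open Complex in
/-- Gauge transformation: with `p k = τ`, subtracting `p e^{iθ} b` turns the non-integrable
derivative `i τ e^{iθ} b` into one controlled by `p'` and `p τ`. -/
theorem tendsto_exp_mul {k τ θ p q : ℝ → ℝ} {m n b : ℝ → ℝ} (h : IsFrenetFrame k τ m n b)
    (hθ : ∀ x, HasDerivAt θ (k x) x) (hp : ∀ x, HasDerivAt p (q x) x)
    (hpk : ∀ x, p x * k x = τ x) (hq : IntegrableOn q (Set.Ioi 0))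
    (hpτ : IntegrableOn (fun x => p x * τ x) (Set.Ioi 0)) (hp0 : Tendsto p atTop (nhds 0)) :
    ∃ w : ℂ, Tendsto (fun x => exp (I * θ x) * (m x + I * n x)) atTop (nhds w) := by
  set M := √(‖m 0‖ ^ 2 + ‖n 0‖ ^ 2 + ‖b 0‖ ^ 2)
  have hn x : |n x| ≤ M := h.norm_normal_le x
  have hb x : |b x| ≤ M := h.norm_binormal_le x
  have hexp_norm x : ‖exp (I * θ x)‖ = 1 := by
    rw [mul_comm]; exact norm_exp_ofReal_mul_I _
  set G : ℝ → ℂ := fun x => -exp (I * θ x) * (q x * b x - p x * τ x * n x)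
  set F : ℝ → ℂ := fun x => exp (I * θ x) * (m x + I * n x) - p x * exp (I * θ x) * b x
  have hF x : HasDerivAt F (G x) x := by
    have hexp := ((hθ x).ofReal_comp.const_mul I).cexp
    refine ((h.hasDerivAt_exp_mul hθ x).sub (((hp x).ofReal_comp.mul hexp).mul
      (h.hasDerivAt_binormal x).ofReal_comp)).congr_deriv ?_
    have hpk' : (p x : ℂ) * k x = τ x := by exact_mod_cast hpk x
    simp only [G, smul_eq_mul, Pi.mul_apply]
    push_cast
    linear_combination -(I * exp (I * θ x) * b x) * hpk'
  have hG_le x : ‖G x‖ ≤ M * (|q x| + |p x * τ x|) := by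
    simp only [G, norm_mul, norm_neg, hexp_norm, one_mul]
    rw [← ofReal_mul, ← ofReal_mul, ← ofReal_mul, ← ofReal_sub, norm_real, Real.norm_eq_abs]
    calc |q x * b x - p x * τ x * n x| ≤ |q x| * |b x| + |p x * τ x| * |n x| := by
          refine (abs_sub _ _).trans_eq ?_
          rw [abs_mul, abs_mul]
      _ ≤ |q x| * M + |p x * τ x| * M := by gcongr; exacts [hb x, hn x]
      _ = M * (|q x| + |p x * τ x|) := by ring
  have hG : IntegrableOn G (Set.Ioi 0) := by
    have hmeas : Measurable G := by
      rw [show G = deriv F from funext fun x => (hF x).deriv.symm]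
      exact measurable_deriv F
    exact ((hq.abs.add hpτ.abs).const_mul M).mono' hmeas.aestronglyMeasurable
      (Eventually.of_forall hG_le)
  have hcorr : Tendsto (fun x => (p x : ℂ) * exp (I * θ x) * b x) atTop (nhds 0) := by
    refine squeeze_zero_norm (a := fun x => M * |p x|) (fun x => ?_) ?_
    · simp only [norm_mul, hexp_norm, norm_real, Real.norm_eq_abs, mul_one]
      nlinarith [hb x, abs_nonneg (p x)]
    · simpa using (hp0.abs.const_mul M)
  refine ⟨_, ((tendsto_limUnder_of_hasDerivAt_of_integrableOn_Ioi (fun x _ => hF x) hG).add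
    hcorr).congr fun x => by ring⟩

end IsFrenetFrame

theorem hasDerivAt_Phi (α x : ℝ) : HasDerivAt (Phi α) (Real.exp (α * x ^ 2 / 4)) x :=
  ((by fun_prop : Continuous fun s : ℝ => Real.exp (α * s ^ 2 / 4)).integral_hasStrictDerivAt
    0 x).hasDerivAt

theorem integrable_sq_mul_exp_neg_mul_sq {a : ℝ} (ha : 0 < a) :
    Integrable fun x : ℝ => x ^ 2 * Real.exp (-a * x ^ 2) := by
  simpa [rpow_two] using integrable_rpow_mul_exp_neg_mul_sq ha (s := 2) (by norm_num)

theorem tendsto_mul_exp_neg_mul_sq_atTop {a : ℝ} (ha : 0 < a) :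
    Tendsto (fun x : ℝ => x * Real.exp (-a * x ^ 2)) atTop (nhds 0) := by
  simpa using (rpow_mul_exp_neg_mul_sq_isLittleO_exp_neg ha 1).tendsto_zero_of_tendsto
    (tendsto_exp_atBot.comp (tendsto_id.const_mul_atTop_of_neg (by norm_num)))

open Complex in
/-- The gauge `p = τ / k = -(β / 2c) x e^{-α x² / 4}` of `IsFrenetFrame.tendsto_exp_mul`. -/
theorem IsFrenetFrame.tendsto_exp_mul_Phi {α β c : ℝ} (hα : 0 < α) (hc : 0 < c)
    {m n b : ℝ → ℝ}
    (h : IsFrenetFrame (fun x => c * Real.exp (α * x ^ 2 / 4)) (fun x => -(β * x / 2)) m n b) :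
    ∃ w : ℂ, Tendsto (fun x : ℝ =>
      exp (I * ((c * Phi α x : ℝ) : ℂ)) * ((m x : ℂ) + I * (n x : ℂ))) atTop (nhds w) := by
  have ha : 0 < α / 4 := by positivity
  set e : ℝ → ℝ := fun x => Real.exp (-(α / 4) * x ^ 2)
  have he x : HasDerivAt (fun x => x * e x) (e x - α / 2 * (x ^ 2 * e x)) x := by
    refine ((hasDerivAt_id x).mul (((hasDerivAt_pow 2 x).const_mul (-(α / 4))).exp)).congr_deriv ?_
    simp only [e, id]
    ring
  refine h.tendsto_exp_mul (p := fun x => -(β / (2 * c)) * (x * e x))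
    (fun x => (hasDerivAt_Phi α x).const_mul c) (fun x => (he x).const_mul _) (fun x => ?_)
    ?_ ?_ ?_
  · have hexp : e x * Real.exp (α * x ^ 2 / 4) = 1 := by
      rw [← Real.exp_add]; ring_nf; exact Real.exp_zero
    calc -(β / (2 * c)) * (x * e x) * (c * Real.exp (α * x ^ 2 / 4))
        = -(β * x / 2) * (c / c) * (e x * Real.exp (α * x ^ 2 / 4)) := by ring
      _ = -(β * x / 2) := by rw [div_self hc.ne', hexp]; ring
  · exact (((integrable_exp_neg_mul_sq ha).sub
      ((integrable_sq_mul_exp_neg_mul_sq ha).const_mul _)).const_mul _).integrableOn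
  · refine (((integrable_sq_mul_exp_neg_mul_sq ha).const_mul (β ^ 2 / (4 * c))).integrableOn
      ).congr_fun (fun x _ => by ring) measurableSet_Ioi
  · simpa [e] using (tendsto_mul_exp_neg_mul_sq_atTop ha).const_mul (-(β / (2 * c)))

open Complex in
theorem tendsto_sub_mul_cos_of_tendsto {θ m n : ℝ → ℝ} {l : Filter ℝ} {ρ φ : ℝ}
    (h : Tendsto (fun x => exp (I * θ x) * (m x + I * n x)) l (nhds (ρ * exp (I * φ)))) :
    Tendsto (fun x => m x - ρ * Real.cos (θ x - φ)) l (nhds 0) := by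
  have hre x : m x - ρ * Real.cos (θ x - φ) = (exp ((-θ x : ℝ) * I)
      * (exp (I * θ x) * (m x + I * n x) - ρ * exp (I * φ))).re := by
    rw [mul_sub, ← mul_assoc, ← Complex.exp_add, mul_left_comm, ← Complex.exp_add,
      show ((-θ x : ℝ) : ℂ) * I + I * θ x = 0 by push_cast; ring,
      show ((-θ x : ℝ) : ℂ) * I + I * φ = ((φ - θ x : ℝ) : ℂ) * I by push_cast; ring,
      Complex.exp_zero, one_mul, sub_re, re_ofReal_mul, exp_ofReal_mul_I_re, ← Real.cos_neg,
      neg_sub]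
    simp
  refine squeeze_zero_norm (fun x => ?_) (tendsto_iff_norm_sub_tendsto_zero.1 h)
  rw [hre, Real.norm_eq_abs]
  refine (abs_re_le_norm _).trans_eq ?_
  rw [norm_mul, norm_exp_ofReal_mul_I, one_mul]

theorem tendsto_div_sqrt_sub_nhdsLT {T x : ℝ} (hx : 0 < x) :
    Tendsto (fun t => x / √(T - t)) (nhdsWithin T (Set.Iio T)) atTop := by
  have h : Tendsto (fun t => T - t) (nhdsWithin T (Set.Iio T)) (nhdsWithin 0 (Set.Ioi 0)) :=
    tendsto_nhdsWithin_iff.2 ⟨tendsto_nhdsWithin_of_tendsto_nhds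
      ((continuous_const.sub continuous_id).tendsto' T 0 (sub_self T)),
      eventually_nhdsWithin_of_forall fun t ht => Set.mem_Ioi.2 (sub_pos.2 ht)⟩
  refine ((tendsto_sqrt_atTop.comp (tendsto_inv_nhdsGT_zero.comp h)).const_mul_atTop hx).congr
    fun t => ?_
  simp [sqrt_inv, div_eq_mul_inv]

theorem stmt8_general (α β c T : ℝ) (hα : α ∈ Set.Ioc (0 : ℝ) 1)
    (hc : 0 < c) (m n b : ℝ → E3)
    (hmdiff : Differentiable ℝ m) (hndiff : Differentiable ℝ n) (hbdiff : Differentiable ℝ b)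
    (hm : ∀ x : ℝ, deriv m x = (c * Real.exp (α * x ^ 2 / 4)) • n x)
    (hn : ∀ x : ℝ, deriv n x
      = -((c * Real.exp (α * x ^ 2 / 4)) • m x) + (-(β * x / 2)) • b x)
    (hb : ∀ x : ℝ, deriv b x = -((-(β * x / 2)) • n x))
    (hm0 : m 0 = EuclideanSpace.single (0 : Fin 3) (1 : ℝ))
    (hn0 : n 0 = EuclideanSpace.single (1 : Fin 3) (1 : ℝ))
    (hb0 : b 0 = EuclideanSpace.single (2 : Fin 3) (1 : ℝ)) :
    ∃ W : Fin 3 → ℂ,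
      (∀ j : Fin 3,
        Tendsto (fun x : ℝ =>
            Complex.exp (Complex.I * ((c * Phi α x : ℝ) : ℂ))
              * ((m x j : ℂ) + Complex.I * (n x j : ℂ)))
          atTop (nhds (W j))) ∧
      ∃ ρ φ : Fin 3 → ℝ,
        (∀ j : Fin 3, 0 ≤ ρ j ∧
          W j = ((ρ j : ℝ) : ℂ) * Complex.exp (Complex.I * ((φ j : ℝ) : ℂ))) ∧
        (∀ x : ℝ, 0 < x → ∀ j : Fin 3,
          Tendsto (fun t : ℝ =>
              m (x / Real.sqrt (T - t)) j
                - ρ j * Real.cos (c * Phi α (x / Real.sqrt (T - t)) - φ j))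
            (nhdsWithin T (Set.Iio T)) (nhds 0)) ∧
        (∀ x : ℝ, x < 0 → ∀ j : Fin 3,
          Tendsto (fun t : ℝ =>
              m (x / Real.sqrt (T - t)) j
                - (if j = 0 then ρ j else -ρ j)
                  * Real.cos (c * Phi α (-x / Real.sqrt (T - t)) - φ j))
            (nhdsWithin T (Set.Iio T)) (nhds 0)) := by
  have frame : IsFrenetFrame (fun x => c * Real.exp (α * x ^ 2 / 4)) (fun x => -(β * x / 2))
      m n b :=
    ⟨fun x => hm x ▸ (hmdiff x).hasDerivAt, fun x => hn x ▸ (hndiff x).hasDerivAt,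
      fun x => hb x ▸ (hbdiff x).hasDerivAt⟩
  have coord (j : Fin 3) := frame.map (EuclideanSpace.proj j)
  choose W hW using fun j => (coord j).tendsto_exp_mul_Phi hα.1 hc
  have polar (j : Fin 3) : W j = (‖W j‖ : ℂ) * Complex.exp (Complex.I * (W j).arg) := by
    rw [mul_comm Complex.I, Complex.norm_mul_exp_arg_mul_I]
  have reflect (j : Fin 3) (x : ℝ) : m x j = (if j = 0 then 1 else -1) * m (-x) j := by
    refine (coord j).tangent_eq_comp_neg (fun x => by ring_nf) (fun x => by ring)
      ((if j = 0 then 1 else -1 : ℝ) • ContinuousLinearMap.id ℝ ℝ) ?_ ?_ ?_ x <;>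
      fin_cases j <;> simp [hm0, hn0, hb0]
  refine ⟨W, hW, fun j => ‖W j‖, fun j => (W j).arg, fun j => ⟨norm_nonneg _, polar j⟩,
    fun x hx j => ?_, fun x hx j => ?_⟩
  · exact (tendsto_sub_mul_cos_of_tendsto (polar j ▸ hW j)).comp (tendsto_div_sqrt_sub_nhdsLT hx)
  · have h := ((tendsto_sub_mul_cos_of_tendsto (polar j ▸ hW j)).comp
      (tendsto_div_sqrt_sub_nhdsLT (T := T) (neg_pos.2 hx))).const_mul (if j = 0 then 1 else -1)
    rw [mul_zero] at h
    refine h.congr fun t => ?_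
    simp only [Function.comp_apply, neg_div]
    rw [reflect j]
    split_ifs
    · simp
    · simp; ring

theorem stmt8 (α β c T : ℝ) (hα : α ∈ Set.Ioc (0 : ℝ) 1) (hβ : β = Real.sqrt (1 - α ^ 2))
    (hc : 0 < c) (m n b : ℝ → E3)
    (hmdiff : Differentiable ℝ m) (hndiff : Differentiable ℝ n) (hbdiff : Differentiable ℝ b)
    (hm : ∀ x : ℝ, deriv m x = (c * Real.exp (α * x ^ 2 / 4)) • n x)
    (hn : ∀ x : ℝ, deriv n x
      = -((c * Real.exp (α * x ^ 2 / 4)) • m x) + (-(β * x / 2)) • b x)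
    (hb : ∀ x : ℝ, deriv b x = -((-(β * x / 2)) • n x))
    (hm0 : m 0 = EuclideanSpace.single (0 : Fin 3) (1 : ℝ))
    (hn0 : n 0 = EuclideanSpace.single (1 : Fin 3) (1 : ℝ))
    (hb0 : b 0 = EuclideanSpace.single (2 : Fin 3) (1 : ℝ)) :
    ∃ W : Fin 3 → ℂ,
      (∀ j : Fin 3,
        Tendsto (fun x : ℝ =>
            Complex.exp (Complex.I * ((c * Phi α x : ℝ) : ℂ))
              * ((m x j : ℂ) + Complex.I * (n x j : ℂ)))
          atTop (nhds (W j))) ∧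
      ∃ ρ φ : Fin 3 → ℝ,
        (∀ j : Fin 3, 0 ≤ ρ j ∧
          W j = ((ρ j : ℝ) : ℂ) * Complex.exp (Complex.I * ((φ j : ℝ) : ℂ))) ∧
        (∀ x : ℝ, 0 < x → ∀ j : Fin 3,
          Tendsto (fun t : ℝ =>
              m (x / Real.sqrt (T - t)) j
                - ρ j * Real.cos (c * Phi α (x / Real.sqrt (T - t)) - φ j))
            (nhdsWithin T (Set.Iio T)) (nhds 0)) ∧
        (∀ x : ℝ, x < 0 → ∀ j : Fin 3,
          Tendsto (fun t : ℝ =>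
              m (x / Real.sqrt (T - t)) j
                - (if j = 0 then ρ j else -ρ j)
                  * Real.cos (c * Phi α (-x / Real.sqrt (T - t)) - φ j))
            (nhdsWithin T (Set.Iio T)) (nhds 0)) :=
  stmt8_general α β c T hα hc m n b hmdiff hndiff hbdiff hm hn hb hm0 hn0 hb0
end
end

section
/- Fix α ∈ (0,1], β = √(1−α²), c > 0 and T ∈ ℝ. Let (m, n, b) solve the Serret–Frenet system m' = k n, n' = −k m + τ b, b' = −τ n with k(x) = c·e^{α x²/4}, τ(x) = −βx/2, and initial conditions m(0) = (1,0,0), n(0) = (0,1,0), b(0) = (0,0,1), and set M(x,t) = m(x/√(T−t)) for t < T. Then for every bounded Lipschitz function φ : ℝ → ℝ³ (i.e., φ ∈ W^{1,∞}(ℝ;ℝ³)), one has lim_{t→T⁻} ∫_ℝ M(x,t)·φ(x) dx = 0. In particular M(·,t) → 0 as t → T⁻ in the sense of tempered distributions. -/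
noncomputable section

open Real MeasureTheory Filter
open scoped RealInnerProductSpace

/-!
Along the Serret–Frenet system, `(k⁻¹ • n)' = (k⁻¹)' • n + (k⁻¹ τ) • b - m`, and `k⁻¹` is the
Gaussian `c⁻¹ exp (-α x² / 4)`, while the frame stays bounded because
`‖m‖² + ‖n‖² + ‖b‖²` is conserved. Hence `m = r - G'` with `G = k⁻¹ • n` and `r` integrable.
Pairing with a bounded Lipschitz `ψ` and integrating by parts (Lipschitz functions are absolutely
continuous, with `‖ψ'‖ ≤ Lip ψ` a.e.) gives `|∫ ⟪m, ψ⟫| ≤ sup ‖ψ‖ ‖r‖₁ + Lip ψ ‖G‖₁`. Substituting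
`x = s y` with `s = √(T - t)`, the pairing of `M (·, t)` with `φ` is `s` times such an integral
for `ψ = φ (s ·)`, whose Lipschitz constant only shrinks, so it is `O(s)`.
-/

open scoped NNReal Topology

section IntegrationByParts

variable {E : Type*} [NormedAddCommGroup E] [InnerProductSpace ℝ E]
  {m r G G' ψ φ : ℝ → E} {K : ℝ≥0} {C : ℝ}

theorem norm_inner_deriv_le_of_lipschitzWith (hψ : LipschitzWith K ψ) (v : E) (x : ℝ) :
    ‖⟪v, deriv ψ x⟫‖ ≤ K * ‖v‖ :=
  (norm_inner_le_norm _ _).trans <| by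
    rw [mul_comm]
    exact mul_le_mul_of_nonneg_right (norm_deriv_le_of_lipschitz hψ) (norm_nonneg _)

variable [FiniteDimensional ℝ E]

theorem intervalIntegral.integral_inner_deriv_add_deriv_inner_eq_sub
    (hG : ∀ x, HasDerivAt G (G' x) x) (hG' : Continuous G') (hψ : LipschitzWith K ψ) (a b : ℝ) :
    ∫ x in a..b, ⟪G x, deriv ψ x⟫ + ⟪G' x, ψ x⟫ = ⟪G b, ψ b⟫ - ⟪G a, ψ a⟫ := by
  have hGC1 : ContDiff ℝ 1 G := contDiff_one_iff_deriv.2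
    ⟨fun x => (hG x).differentiableAt, by rwa [show deriv G = G' from funext fun x => (hG x).deriv]⟩
  have hloc : LocallyLipschitz fun x => ⟪G x, ψ x⟫ :=
    (contDiff_inner (n := 1)).locallyLipschitz.comp
      (hGC1.locallyLipschitz.prodMk hψ.locallyLipschitz)
  obtain ⟨L, hL⟩ := hloc.locallyLipschitzOn.exists_lipschitzOnWith_of_compact
    (isCompact_uIcc (a := a) (b := b))
  rw [← hL.absolutelyContinuousOnInterval.integral_deriv_eq_sub]
  refine intervalIntegral.integral_congr_ae ?_
  filter_upwards [hψ.ae_differentiableAt_real] with x hx _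
  exact ((hG x).inner ℝ hx.hasDerivAt).deriv.symm

variable [MeasurableSpace E] [BorelSpace E]

theorem integral_deriv_inner_eq_neg_integral_inner_deriv
    (hG : ∀ x, HasDerivAt G (G' x) x) (hG' : Continuous G') (hGi : Integrable G)
    (hG0 : Tendsto G (cocompact ℝ) (𝓝 0)) (hψ : LipschitzWith K ψ) (hψC : ∀ x, ‖ψ x‖ ≤ C)
    (hi : Integrable fun x => ⟪G' x, ψ x⟫) :
    ∫ x, ⟪G' x, ψ x⟫ = -∫ x, ⟪G x, deriv ψ x⟫ := by
  have hGc : Continuous G := continuous_iff_continuousAt.2 fun x => (hG x).continuousAt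
  have hGψ' : Integrable fun x => ⟪G x, deriv ψ x⟫ :=
    (hGi.norm.const_mul K).mono'
      (hGc.aestronglyMeasurable.inner (measurable_deriv ψ).aestronglyMeasurable)
      (ae_of_all _ fun x => norm_inner_deriv_le_of_lipschitzWith hψ _ x)
  have hbdry : Tendsto (fun x => ⟪G x, ψ x⟫) (cocompact ℝ) (𝓝 0) := by
    refine squeeze_zero_norm (fun x => (norm_inner_le_norm _ _).trans
      (mul_le_mul_of_nonneg_left (hψC x) (norm_nonneg _))) ?_
    simpa using hG0.norm.mul_const C
  have hlim : Tendsto (fun R : ℝ => (∫ x in -R..R, ⟪G x, deriv ψ x⟫) + ∫ x in -R..R, ⟪G' x, ψ x⟫)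
      atTop (𝓝 0) := by
    have hsub := (hbdry.mono_left atTop_le_cocompact).sub
      ((hbdry.mono_left atBot_le_cocompact).comp tendsto_neg_atTop_atBot)
    rw [sub_zero] at hsub
    refine hsub.congr fun R => ?_
    rw [← intervalIntegral.integral_add hGψ'.intervalIntegrable hi.intervalIntegrable,
      intervalIntegral.integral_inner_deriv_add_deriv_inner_eq_sub hG hG' hψ]
    rfl
  have hlim' := (intervalIntegral_tendsto_integral hGψ' tendsto_neg_atTop_atBot tendsto_id).add
    (intervalIntegral_tendsto_integral hi tendsto_neg_atTop_atBot tendsto_id)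
  linarith [tendsto_nhds_unique hlim' hlim]

theorem abs_integral_inner_le_of_hasDerivAt_sub (hG : ∀ x, HasDerivAt G (r x - m x) x)
    (hm : Continuous m) (hr : Continuous r) (hGi : Integrable G)
    (hG0 : Tendsto G (cocompact ℝ) (𝓝 0)) (hri : Integrable r) (hψ : LipschitzWith K ψ)
    (hψC : ∀ x, ‖ψ x‖ ≤ C) :
    |∫ x, ⟪m x, ψ x⟫| ≤ C * (∫ x, ‖r x‖) + K * ∫ x, ‖G x‖ := by
  have hC : 0 ≤ C := (norm_nonneg _).trans (hψC 0)
  have hrψ_le : ∀ x, ‖⟪r x, ψ x⟫‖ ≤ C * ‖r x‖ := fun x =>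
    (norm_inner_le_norm _ _).trans (by rw [mul_comm]; gcongr; exact hψC x)
  have hrψ : Integrable fun x => ⟪r x, ψ x⟫ :=
    (hri.norm.const_mul C).mono' (hr.inner hψ.continuous).aestronglyMeasurable
      (ae_of_all _ hrψ_le)
  by_cases hmψ : Integrable fun x => ⟪m x, ψ x⟫
  swap
  · rw [integral_undef hmψ, abs_zero]
    positivity
  have hIBP := integral_deriv_inner_eq_neg_integral_inner_deriv hG (hr.sub hm) hGi hG0 hψ hψC
    (by simp only [inner_sub_left]; exact hrψ.sub hmψ)
  have hsplit : ∫ x, ⟪r x - m x, ψ x⟫ = (∫ x, ⟪r x, ψ x⟫) - ∫ x, ⟪m x, ψ x⟫ := by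
    rw [← integral_sub hrψ hmψ]
    simp only [inner_sub_left]
  have hr_le : |∫ x, ⟪r x, ψ x⟫| ≤ C * ∫ x, ‖r x‖ := by
    rw [← integral_const_mul]
    exact norm_integral_le_of_norm_le (hri.norm.const_mul C) (ae_of_all _ hrψ_le)
  have hG_le : |∫ x, ⟪G x, deriv ψ x⟫| ≤ K * ∫ x, ‖G x‖ := by
    rw [← integral_const_mul]
    exact norm_integral_le_of_norm_le (hGi.norm.const_mul K)
      (ae_of_all _ fun x => norm_inner_deriv_le_of_lipschitzWith hψ _ x)
  calc |∫ x, ⟪m x, ψ x⟫| = |(∫ x, ⟪r x, ψ x⟫) + ∫ x, ⟪G x, deriv ψ x⟫| := by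
        congr 1; linarith
    _ ≤ |∫ x, ⟪r x, ψ x⟫| + |∫ x, ⟪G x, deriv ψ x⟫| := abs_add_le _ _
    _ ≤ C * (∫ x, ‖r x‖) + K * ∫ x, ‖G x‖ := add_le_add hr_le hG_le

theorem tendsto_integral_inner_comp_div_nhdsGT_zero (hG : ∀ x, HasDerivAt G (r x - m x) x)
    (hm : Continuous m) (hr : Continuous r) (hGi : Integrable G)
    (hG0 : Tendsto G (cocompact ℝ) (𝓝 0)) (hri : Integrable r) (hφ : LipschitzWith K φ)
    (hφC : ∀ x, ‖φ x‖ ≤ C) :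
    Tendsto (fun s => ∫ x, ⟪m (x / s), φ x⟫) (𝓝[>] 0) (𝓝 0) := by
  have hbound : ∀ s > 0, ‖∫ x, ⟪m (x / s), φ x⟫‖
      ≤ s * (C * (∫ x, ‖r x‖) + (K * s) * ∫ x, ‖G x‖) := by
    intro s hs
    have hscale : ∫ x, ⟪m (x / s), φ x⟫ = s * ∫ y, ⟪m y, φ (s • y)⟫ := by
      calc ∫ x, ⟪m (x / s), φ x⟫ = ∫ x, (fun y => ⟪m y, φ (s • y)⟫) (x / s) := by
            simp only [smul_eq_mul, mul_div_cancel₀ _ hs.ne']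
        _ = s * ∫ y, ⟪m y, φ (s • y)⟫ := by
            rw [Measure.integral_comp_div (fun y => ⟪m y, φ (s • y)⟫) s, abs_of_pos hs,
              smul_eq_mul]
    have hpair := abs_integral_inner_le_of_hasDerivAt_sub hG hm hr hGi hG0 hri
      (hφ.comp (lipschitzWith_smul s)) (fun y => hφC (s • y))
    rw [NNReal.coe_mul, coe_nnnorm, Real.norm_eq_abs, abs_of_pos hs] at hpair
    rw [hscale, norm_mul, Real.norm_eq_abs, Real.norm_eq_abs, abs_of_pos hs]
    exact mul_le_mul_of_nonneg_left hpair hs.le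
  have hlim (A B : ℝ) : Tendsto (fun s : ℝ => s * (C * A + (K * s) * B)) (𝓝[>] 0) (𝓝 0) :=
    tendsto_nhdsWithin_of_tendsto_nhds (Continuous.tendsto' (by fun_prop) _ _ (by simp))
  exact squeeze_zero_norm' (eventually_nhdsWithin_of_forall hbound)
    (hlim (∫ x, ‖r x‖) (∫ x, ‖G x‖))

end IntegrationByParts

section FrenetFrame

variable {E : Type*} [NormedAddCommGroup E] [InnerProductSpace ℝ E] {k τ : ℝ → ℝ}
  {m n b : ℝ → E}

theorem norm_sq_add_norm_sq_add_norm_sq_eq_of_frenet (hm : ∀ x, HasDerivAt m (k x • n x) x)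
    (hn : ∀ x, HasDerivAt n (-(k x • m x) + τ x • b x) x)
    (hb : ∀ x, HasDerivAt b (-(τ x • n x)) x) (x : ℝ) :
    ‖m x‖ ^ 2 + ‖n x‖ ^ 2 + ‖b x‖ ^ 2 = ‖m 0‖ ^ 2 + ‖n 0‖ ^ 2 + ‖b 0‖ ^ 2 := by
  have hderiv : ∀ x, HasDerivAt (fun x => ⟪m x, m x⟫ + ⟪n x, n x⟫ + ⟪b x, b x⟫) 0 x := fun x => by
    refine ((((hm x).inner ℝ (hm x)).add ((hn x).inner ℝ (hn x))).add
      ((hb x).inner ℝ (hb x))).congr_deriv ?_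
    simp only [inner_add_right, inner_add_left, inner_neg_right, inner_neg_left,
      real_inner_smul_left, real_inner_smul_right, real_inner_comm (m x) (n x),
      real_inner_comm (n x) (b x)]
    ring
  simpa only [real_inner_self_eq_norm_sq] using
    is_const_of_deriv_eq_zero (fun x => (hderiv x).differentiableAt) (fun x => (hderiv x).deriv) x 0

theorem hasDerivAt_smul_normal_of_frenet {a a' : ℝ → ℝ}
    (hn : ∀ x, HasDerivAt n (-(k x • m x) + τ x • b x) x) (ha : ∀ x, HasDerivAt a (a' x) x)
    (hak : ∀ x, a x * k x = 1) (x : ℝ) :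
    HasDerivAt (fun x => a x • n x) ((a' x • n x + (a x * τ x) • b x) - m x) x := by
  refine ((ha x).smul (hn x)).congr_deriv ?_
  simp only [smul_add, smul_neg, smul_smul, hak, one_smul]
  abel

theorem exists_integrable_decomposition_of_shrinker {α β c : ℝ} (hα : 0 < α) (hc : 0 < c)
    (hm : ∀ x, HasDerivAt m ((c * exp (α * x ^ 2 / 4)) • n x) x)
    (hn : ∀ x, HasDerivAt n (-((c * exp (α * x ^ 2 / 4)) • m x) + (-(β * x / 2)) • b x) x)
    (hb : ∀ x, HasDerivAt b (-((-(β * x / 2)) • n x)) x) :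
    ∃ G r : ℝ → E, (∀ x, HasDerivAt G (r x - m x) x) ∧ Continuous r ∧ Integrable G ∧
      Integrable r ∧ Tendsto G (cocompact ℝ) (𝓝 0) := by
  set S := ‖m 0‖ ^ 2 + ‖n 0‖ ^ 2 + ‖b 0‖ ^ 2
  have hnorm := norm_sq_add_norm_sq_add_norm_sq_eq_of_frenet hm hn hb
  have hnB : ∀ x, ‖n x‖ ≤ √S := fun x => (Real.le_sqrt (norm_nonneg _) (by positivity)).2
    (by nlinarith [hnorm x, sq_nonneg ‖m x‖, sq_nonneg ‖b x‖])
  have hbB : ∀ x, ‖b x‖ ≤ √S := fun x => (Real.le_sqrt (norm_nonneg _) (by positivity)).2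
    (by nlinarith [hnorm x, sq_nonneg ‖m x‖, sq_nonneg ‖n x‖])
  have hnc : Continuous n := continuous_iff_continuousAt.2 fun x => (hn x).continuousAt
  have hbc : Continuous b := continuous_iff_continuousAt.2 fun x => (hb x).continuousAt
  set g : ℝ → ℝ := fun x => exp (-(α / 4) * x ^ 2)
  have hg : ∀ x, HasDerivAt g (-(α / 2) * (x * g x)) x := fun x => by
    refine ((hasDerivAt_pow 2 x).const_mul (-(α / 4))).exp.congr_deriv ?_
    ring
  have hgk : ∀ x, c⁻¹ * g x * (c * exp (α * x ^ 2 / 4)) = 1 := fun x => by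
    rw [mul_mul_mul_comm, inv_mul_cancel₀ hc.ne', ← Real.exp_add]
    ring_nf
    simp
  have hgi : Integrable g := integrable_exp_neg_mul_sq (by positivity)
  have hxgi : Integrable fun x => x * g x := integrable_mul_exp_neg_mul_sq (by positivity)
  have hg0 : Tendsto g (cocompact ℝ) (𝓝 0) := by
    simpa only [Real.rpow_zero, one_mul] using
      tendsto_rpow_abs_mul_exp_neg_mul_sq_cocompact (a := α / 4) (by positivity) 0
  refine ⟨fun x => (c⁻¹ * g x) • n x,
    fun x => (c⁻¹ * (-(α / 2) * (x * g x))) • n x + (c⁻¹ * g x * (-(β * x / 2))) • b x,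
    hasDerivAt_smul_normal_of_frenet hn (fun x => (hg x).const_mul c⁻¹) hgk, by fun_prop,
    ?_, ?_, ?_⟩
  · exact (hgi.const_mul c⁻¹).smul_bdd _ hnc.aestronglyMeasurable (ae_of_all _ hnB)
  · have hcoef₁ : Integrable fun x => c⁻¹ * (-(α / 2) * (x * g x)) :=
      (hxgi.const_mul _).const_mul _
    have hcoef₂ : Integrable fun x => c⁻¹ * g x * (-(β * x / 2)) :=
      (hxgi.const_mul (-(β / 2) * c⁻¹)).congr (ae_of_all _ fun x => by ring)
    exact (hcoef₁.smul_bdd _ hnc.aestronglyMeasurable (ae_of_all _ hnB)).add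
      (hcoef₂.smul_bdd _ hbc.aestronglyMeasurable (ae_of_all _ hbB))
  · have ha0 : Tendsto (fun x => c⁻¹ * g x) (cocompact ℝ) (𝓝 0) := by
      simpa using hg0.const_mul c⁻¹
    exact ha0.zero_smul_isBoundedUnder_le (isBoundedUnder_of ⟨√S, hnB⟩)

end FrenetFrame

theorem stmt9_general (α β c T : ℝ) (hα : α ∈ Set.Ioc (0 : ℝ) 1)
    (hc : 0 < c) (m n b : ℝ → E3)
    (hmdiff : Differentiable ℝ m) (hndiff : Differentiable ℝ n) (hbdiff : Differentiable ℝ b)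
    (hm : ∀ x : ℝ, deriv m x = (c * Real.exp (α * x ^ 2 / 4)) • n x)
    (hn : ∀ x : ℝ, deriv n x
      = -((c * Real.exp (α * x ^ 2 / 4)) • m x) + (-(β * x / 2)) • b x)
    (hb : ∀ x : ℝ, deriv b x = -((-(β * x / 2)) • n x))
    (M : ℝ → ℝ → E3) (hM : M = fun x t => m (x / Real.sqrt (T - t))) :
    ∀ φ : ℝ → E3, (∃ L : NNReal, LipschitzWith L φ) → (∃ C : ℝ, ∀ x : ℝ, ‖φ x‖ ≤ C) →
      Tendsto (fun t : ℝ => ∫ x : ℝ, ⟪M x t, φ x⟫)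
        (nhdsWithin T (Set.Iio T)) (nhds 0) := by
  rintro φ ⟨L, hφ⟩ ⟨C, hφC⟩
  obtain ⟨G, r, hG, hr, hGi, hri, hG0⟩ := exists_integrable_decomposition_of_shrinker hα.1 hc
    (fun x => hm x ▸ (hmdiff x).hasDerivAt) (fun x => hn x ▸ (hndiff x).hasDerivAt)
    (fun x => hb x ▸ (hbdiff x).hasDerivAt)
  have hscale : Tendsto (fun t => √(T - t)) (𝓝[<] T) (𝓝[>] 0) := by
    refine tendsto_nhdsWithin_iff.2 ⟨?_, eventually_nhdsWithin_of_forall fun t ht =>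
      Real.sqrt_pos.2 (sub_pos.2 ht)⟩
    exact tendsto_nhdsWithin_of_tendsto_nhds (Continuous.tendsto' (by fun_prop) _ _ (by simp))
  subst hM
  exact (tendsto_integral_inner_comp_div_nhdsGT_zero hG hmdiff.continuous hr hGi hG0 hri hφ
    hφC).comp hscale

theorem stmt9 (α β c T : ℝ) (hα : α ∈ Set.Ioc (0 : ℝ) 1) (hβ : β = Real.sqrt (1 - α ^ 2))
    (hc : 0 < c) (m n b : ℝ → E3)
    (hmdiff : Differentiable ℝ m) (hndiff : Differentiable ℝ n) (hbdiff : Differentiable ℝ b)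
    (hm : ∀ x : ℝ, deriv m x = (c * Real.exp (α * x ^ 2 / 4)) • n x)
    (hn : ∀ x : ℝ, deriv n x
      = -((c * Real.exp (α * x ^ 2 / 4)) • m x) + (-(β * x / 2)) • b x)
    (hb : ∀ x : ℝ, deriv b x = -((-(β * x / 2)) • n x))
    (hm0 : m 0 = EuclideanSpace.single (0 : Fin 3) (1 : ℝ))
    (hn0 : n 0 = EuclideanSpace.single (1 : Fin 3) (1 : ℝ))
    (hb0 : b 0 = EuclideanSpace.single (2 : Fin 3) (1 : ℝ))
    (M : ℝ → ℝ → E3) (hM : M = fun x t => m (x / Real.sqrt (T - t))) :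
    ∀ φ : ℝ → E3, (∃ L : NNReal, LipschitzWith L φ) → (∃ C : ℝ, ∀ x : ℝ, ‖φ x‖ ≤ C) →
      Tendsto (fun t : ℝ => ∫ x : ℝ, ⟪M x t, φ x⟫)
        (nhdsWithin T (Set.Iio T)) (nhds 0) :=
  stmt9_general α β c T hα hc m n b hmdiff hndiff hbdiff hm hn hb M hM
end
end

section
/- Fix α ∈ (0,1], β = √(1−α²) and c > 0. Let (m, n, b) solve the Serret–Frenet system m' = k n, n' = −k m + τ b, b' = −τ n with k(x) = c·e^{α x²/4}, τ(x) = −βx/2, and initial conditions m(0) = (1,0,0), n(0) = (0,1,0), b(0) = (0,0,1). The limit B⁺ := lim_{x→∞} b(x) = (B₁, B₂, B₃) exists and is a unit vector; set B⁻ := (−B₁, B₂, B₃), and let C⁺ and C⁻ be the great circles C^± = {p ∈ ℝ³ : |p| = 1 and p·B^± = 0}. Then for all x ≥ 1, dist(m(x), C⁺) ≤ (30√2 β/(c α²)) x e^{−α x²/4}, and for all x ≤ −1, dist(m(x), C⁻) ≤ (30√2 β/(c α²)) |x| e^{−α x²/4}, where dist denotes the Euclidean distance from a point to a set in ℝ³.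 -/
/-!
Since the coefficient matrix of the Serret–Frenet system is skew-symmetric, the frame `(m, n, b)`
stays orthonormal. From `m' = k n` and `b' = -τ n` we get `b' = ρ m'` with
`ρ = -τ / k = (β / 2c) x e^{-αx²/4}`; hence `b - ρ m` has derivative `-ρ' m`, which is integrable
at `+∞`, so `b` converges to some `B` with error `O(x e^{-αx²/4})`. As `m ⊥ b`, this bounds
`⟪m, B⟫`, and a unit vector `p` lies within `√2 |⟪p, B⟫|` of the great circle `B^⊥`.
For `x < 0` we use `m (-x) = -R (m x)`, with `R` the reflection of the first coordinate: as `k`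
is even and `τ` odd, both sides solve the same system with the same initial frame.
-/

noncomputable section

open Real MeasureTheory Filter Metric
open scoped RealInnerProductSpace

open Topology Module

structure IsFrenetSolution {E : Type*} [NormedAddCommGroup E] [NormedSpace ℝ E]
    (k τ : ℝ → ℝ) (m n b : ℝ → E) : Prop where
  hasDerivAt_m : ∀ x, HasDerivAt m (k x • n x) x
  hasDerivAt_n : ∀ x, HasDerivAt n (-(k x • m x) + τ x • b x) x
  hasDerivAt_b : ∀ x, HasDerivAt b (-(τ x • n x)) x

namespace IsFrenetSolution

section Normed

variable {E F : Type*} [NormedAddCommGroup E] [NormedSpace ℝ E]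
  [NormedAddCommGroup F] [NormedSpace ℝ F] {k τ : ℝ → ℝ} {m n b m₂ n₂ b₂ : ℝ → E}

theorem map (h : IsFrenetSolution k τ m n b) (L : E →L[ℝ] F) :
    IsFrenetSolution k τ (L ∘ m) (L ∘ n) (L ∘ b) where
  hasDerivAt_m x := by simpa using L.hasFDerivAt.comp_hasDerivAt x (h.hasDerivAt_m x)
  hasDerivAt_n x := by simpa using L.hasFDerivAt.comp_hasDerivAt x (h.hasDerivAt_n x)
  hasDerivAt_b x := by simpa using L.hasFDerivAt.comp_hasDerivAt x (h.hasDerivAt_b x)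

theorem sub (h : IsFrenetSolution k τ m n b) (h₂ : IsFrenetSolution k τ m₂ n₂ b₂) :
    IsFrenetSolution k τ (m - m₂) (n - n₂) (b - b₂) where
  hasDerivAt_m x := by
    simpa [smul_sub] using (h.hasDerivAt_m x).sub (h₂.hasDerivAt_m x)
  hasDerivAt_n x := by
    convert (h.hasDerivAt_n x).sub (h₂.hasDerivAt_n x) using 1
    simp only [Pi.sub_apply, smul_sub]
    abel
  hasDerivAt_b x := by
    simpa [smul_sub, sub_eq_add_neg, add_comm] using (h.hasDerivAt_b x).sub (h₂.hasDerivAt_b x)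

theorem comp_neg (h : IsFrenetSolution k τ m n b) (hk : ∀ x, k (-x) = k x)
    (hτ : ∀ x, τ (-x) = -τ x) :
    IsFrenetSolution k τ (fun x => -m (-x)) (fun x => n (-x)) (fun x => b (-x)) where
  hasDerivAt_m x := by
    simpa [hk, Function.comp_def, Pi.neg_def] using
      ((h.hasDerivAt_m (-x)).scomp x (hasDerivAt_neg x)).neg
  hasDerivAt_n x := by
    simpa [hk, hτ, Function.comp_def] using (h.hasDerivAt_n (-x)).scomp x (hasDerivAt_neg x)
  hasDerivAt_b x := by
    simpa [hτ, Function.comp_def] using (h.hasDerivAt_b (-x)).scomp x (hasDerivAt_neg x)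

end Normed

section Inner

variable {E : Type*} [NormedAddCommGroup E] [InnerProductSpace ℝ E]
  {k τ : ℝ → ℝ} {m n b m₂ n₂ b₂ : ℝ → E}

theorem inner_add_inner_add_inner_eq (h : IsFrenetSolution k τ m n b)
    (h₂ : IsFrenetSolution k τ m₂ n₂ b₂) (x : ℝ) :
    ⟪m x, m₂ x⟫ + ⟪n x, n₂ x⟫ + ⟪b x, b₂ x⟫ = ⟪m 0, m₂ 0⟫ + ⟪n 0, n₂ 0⟫ + ⟪b 0, b₂ 0⟫ := by
  have hderiv : ∀ y, HasDerivAt (fun y => ⟪m y, m₂ y⟫ + ⟪n y, n₂ y⟫ + ⟪b y, b₂ y⟫) 0 y := by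
    intro y
    refine (((h.hasDerivAt_m y).inner ℝ (h₂.hasDerivAt_m y)).fun_add
      ((h.hasDerivAt_n y).inner ℝ (h₂.hasDerivAt_n y))).fun_add
      ((h.hasDerivAt_b y).inner ℝ (h₂.hasDerivAt_b y)) |>.congr_deriv ?_
    simp only [inner_add_left, inner_add_right, inner_neg_left, inner_neg_right,
      real_inner_smul_left, real_inner_smul_right]
    ring
  exact is_const_of_deriv_eq_zero (fun y => (hderiv y).differentiableAt)
    (fun y => (hderiv y).deriv) x 0

theorem eq_of_apply_zero_eq (h : IsFrenetSolution k τ m n b) (h₂ : IsFrenetSolution k τ m₂ n₂ b₂)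
    (hm : m 0 = m₂ 0) (hn : n 0 = n₂ 0) (hb : b 0 = b₂ 0) : m = m₂ ∧ n = n₂ ∧ b = b₂ := by
  have energy (x : ℝ) : ‖m x - m₂ x‖ ^ 2 + ‖n x - n₂ x‖ ^ 2 + ‖b x - b₂ x‖ ^ 2 = 0 := by
    simpa only [Pi.sub_apply, hm, hn, hb, sub_self, inner_zero_left, add_zero,
      real_inner_self_eq_norm_sq] using (h.sub h₂).inner_add_inner_add_inner_eq (h.sub h₂) x
  refine ⟨funext fun x => ?_, funext fun x => ?_, funext fun x => ?_⟩ <;>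
  · have := energy x
    rw [← sub_eq_zero, ← norm_eq_zero]
    nlinarith [sq_nonneg ‖m x - m₂ x‖, sq_nonneg ‖n x - n₂ x‖, sq_nonneg ‖b x - b₂ x‖,
      norm_nonneg (m x - m₂ x), norm_nonneg (n x - n₂ x), norm_nonneg (b x - b₂ x)]

end Inner

end IsFrenetSolution

open Matrix in
theorem EuclideanSpace.orthonormal_iff_sum_mul_apply {ι : Type*} [Fintype ι] [DecidableEq ι]
    {v : ι → EuclideanSpace ℝ ι} :
    Orthonormal ℝ v ↔ ∀ i j, ∑ r, v r i * v r j = if i = j then 1 else 0 := by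
  set A : Matrix ι ι ℝ := Matrix.of fun r i => v r i
  have rows : Orthonormal ℝ v ↔ A * Aᵀ = 1 := by
    rw [orthonormal_iff_ite, ← Matrix.ext_iff]
    simp only [mul_apply, transpose_apply, one_apply, A, of_apply, PiLp.inner_apply,
      RCLike.inner_apply, conj_trivial, mul_comm]
  have cols : (∀ i j, ∑ r, v r i * v r j = if i = j then 1 else 0) ↔ Aᵀ * A = 1 := by
    rw [← Matrix.ext_iff]
    simp only [mul_apply, transpose_apply, one_apply, A, of_apply]
  rw [rows, cols, mul_eq_one_comm]

/-- The coordinates `(m i, n i, b i)` solve the system in `ℝ`, so the columns of the matrix with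
rows `m, n, b` keep their inner products; for a square matrix, orthonormal columns mean orthonormal
rows. -/
theorem IsFrenetSolution.orthonormal {k τ : ℝ → ℝ} {m n b : ℝ → E3}
    (h : IsFrenetSolution k τ m n b) (h0 : Orthonormal ℝ ![m 0, n 0, b 0]) (x : ℝ) :
    Orthonormal ℝ ![m x, n x, b x] := by
  rw [EuclideanSpace.orthonormal_iff_sum_mul_apply] at h0 ⊢
  intro i j
  have := (h.map (EuclideanSpace.proj i)).inner_add_inner_add_inner_eq
    (h.map (EuclideanSpace.proj j)) x
  rw [← h0 i j]
  simpa [Fin.sum_univ_three, mul_comm] using this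

def firstCoordReflection : E3 ≃ₗᵢ[ℝ] E3 :=
  LinearIsometryEquiv.piLpCongrRight 2 fun i =>
    if i = 0 then LinearIsometryEquiv.neg ℝ else LinearIsometryEquiv.refl ℝ ℝ

theorem firstCoordReflection_apply (p : E3) :
    firstCoordReflection p = (WithLp.equiv 2 (Fin 3 → ℝ)).symm ![-p 0, p 1, p 2] := by
  ext i
  fin_cases i <;> simp [firstCoordReflection]

theorem IsFrenetSolution.apply_eq_neg_firstCoordReflection_apply_neg {k τ : ℝ → ℝ}
    {m n b : ℝ → E3} (h : IsFrenetSolution k τ m n b) (hk : ∀ x, k (-x) = k x)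
    (hτ : ∀ x, τ (-x) = -τ x) (hm0 : m 0 = EuclideanSpace.single 0 1)
    (hn0 : n 0 = EuclideanSpace.single 1 1) (hb0 : b 0 = EuclideanSpace.single 2 1) (x : ℝ) :
    m x = -firstCoordReflection (m (-x)) := by
  have hR := (h.comp_neg hk hτ).map firstCoordReflection.toContinuousLinearMap
  have := congr_fun (hR.eq_of_apply_zero_eq h ?_ ?_ ?_).1 x
  · simpa using this.symm
  all_goals ext i; fin_cases i <;> simp [firstCoordReflection, hm0, hn0, hb0]

theorem exists_tendsto_norm_sub_le_of_norm_deriv_le {E : Type*} [NormedAddCommGroup E]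
    [NormedSpace ℝ E] [CompleteSpace E] {f f' : ℝ → E} {g g' : ℝ → ℝ} {a : ℝ}
    (hf : ∀ x, a ≤ x → HasDerivAt f (f' x) x) (hg : ∀ x, a ≤ x → HasDerivAt g (g' x) x)
    (hfg : ∀ x, a ≤ x → ‖f' x‖ ≤ -g' x) (hg0 : Tendsto g atTop (𝓝 0)) :
    ∃ L, Tendsto f atTop (𝓝 L) ∧ ∀ x, a ≤ x → ‖f x - L‖ ≤ g x := by
  have increment : ∀ x y, a ≤ x → x ≤ y → ‖f y - f x‖ ≤ g x - g y := by
    intro x y hx hxy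
    have := image_norm_le_of_norm_deriv_right_le_deriv_boundary'
      (f := fun y => f y - f x) (f' := f') (B := fun y => g x - g y) (B' := fun y => -g' y)
      (a := x) (b := y)
      (fun z hz => ((hf z (hx.trans hz.1)).sub_const (f x)).continuousAt.continuousWithinAt)
      (fun z hz => ((hf z (hx.trans hz.1)).sub_const (f x)).hasDerivWithinAt)
      (by simp)
      (fun z hz => ((hg z (hx.trans hz.1)).const_sub (g x)).continuousAt.continuousWithinAt)
      (fun z hz => ((hg z (hx.trans hz.1)).const_sub (g x)).hasDerivWithinAt)
      (fun z hz => hfg z (hx.trans hz.1))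
    exact this ⟨hxy, le_rfl⟩
  have hcauchy : CauchySeq f := by
    rw [Metric.cauchySeq_iff']
    intro ε hε
    obtain ⟨N, hN⟩ := (eventually_ge_atTop a).and
      ((hg0.eventually (Metric.ball_mem_nhds 0 (half_pos hε)))) |>.exists_forall_of_atTop
    refine ⟨N, fun y hy => ?_⟩
    have hNa := (hN N le_rfl).1
    have h1 := (hN N le_rfl).2
    have h2 := (hN y hy).2
    simp only [Real.dist_eq, sub_zero, abs_lt] at h1 h2
    rw [dist_eq_norm]
    linarith [increment N y hNa hy]
  obtain ⟨L, hL⟩ := cauchySeq_tendsto_of_complete hcauchy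
  refine ⟨L, hL, fun x hx => ?_⟩
  have hlim : Tendsto (fun y => g x - g y) atTop (𝓝 (g x)) := by
    simpa using tendsto_const_nhds.sub hg0
  rw [norm_sub_rev]
  exact le_of_tendsto_of_tendsto ((hL.sub_const (f x)).norm) hlim
    ((eventually_ge_atTop x).mono fun y hy => increment x y hx hy)

theorem tendsto_rpow_mul_exp_neg_mul_sq_atTop {a : ℝ} (ha : 0 < a) (s : ℝ) :
    Tendsto (fun x : ℝ => x ^ s * exp (-a * x ^ 2)) atTop (𝓝 0) := by
  refine ((tendsto_rpow_abs_mul_exp_neg_mul_sq_cocompact ha s).mono_left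
    atTop_le_cocompact).congr' ?_
  filter_upwards [eventually_ge_atTop 0] with x hx
  rw [abs_of_nonneg hx]

theorem exists_tendsto_norm_sub_le_of_hasDerivAt_smul {E : Type*} [NormedAddCommGroup E]
    [NormedSpace ℝ E] [CompleteSpace E] {m b v : ℝ → E} {ρ ρ' g g' : ℝ → ℝ} {a : ℝ}
    (hm' : ∀ x, HasDerivAt m (v x) x) (hb' : ∀ x, HasDerivAt b (ρ x • v x) x)
    (hm : ∀ x, ‖m x‖ ≤ 1)
    (hρ : ∀ x, a ≤ x → HasDerivAt ρ (ρ' x) x) (hg : ∀ x, a ≤ x → HasDerivAt g (g' x) x)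
    (hρg : ∀ x, a ≤ x → |ρ' x| ≤ -g' x) (hρ0 : Tendsto ρ atTop (𝓝 0))
    (hg0 : Tendsto g atTop (𝓝 0)) :
    ∃ B, Tendsto b atTop (𝓝 B) ∧ ∀ x, a ≤ x → ‖b x - B‖ ≤ g x + |ρ x| := by
  have hρm (x : ℝ) : ‖ρ x • m x‖ ≤ |ρ x| := by
    rw [norm_smul, Real.norm_eq_abs]
    exact mul_le_of_le_one_right (abs_nonneg _) (hm x)
  obtain ⟨B, hB, hbound⟩ := exists_tendsto_norm_sub_le_of_norm_deriv_le
    (f := fun x => b x - ρ x • m x) (f' := fun x => -(ρ' x • m x))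
    (fun x hx => ((hb' x).sub ((hρ x hx).smul (hm' x))).congr_deriv (by abel))
    hg (fun x hx => by
      rw [norm_neg, norm_smul, Real.norm_eq_abs]
      exact (mul_le_of_le_one_right (abs_nonneg _) (hm x)).trans (hρg x hx)) hg0
  have hρm0 : Tendsto (fun x => ρ x • m x) atTop (𝓝 0) :=
    squeeze_zero_norm hρm (by simpa using hρ0.abs)
  refine ⟨B, by simpa using hB.add hρm0, fun x hx => ?_⟩
  calc ‖b x - B‖ = ‖(b x - ρ x • m x - B) + ρ x • m x‖ := by congr 1; abel
    _ ≤ g x + |ρ x| := (norm_add_le _ _).trans (add_le_add (hbound x hx) (hρm x))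

section Shrinker

variable {α β c : ℝ}

theorem hasDerivAt_exp_neg_mul_sq_div_four (α x : ℝ) :
    HasDerivAt (fun x => exp (-α * x ^ 2 / 4)) (-(α * x / 2) * exp (-α * x ^ 2 / 4)) x := by
  convert (((hasDerivAt_pow 2 x).const_mul (-α)).div_const 4).exp using 1
  ring

theorem hasDerivAt_mul_exp_neg_mul_sq_div_four (α x : ℝ) :
    HasDerivAt (fun x => x * exp (-α * x ^ 2 / 4))
      ((1 - α * x ^ 2 / 2) * exp (-α * x ^ 2 / 4)) x :=
  ((hasDerivAt_id' x).fun_mul (hasDerivAt_exp_neg_mul_sq_div_four α x)).congr_deriv (by ring)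

theorem hasDerivAt_add_inv_mul_exp_neg_mul_sq_div_four (hα : 0 < α) {x : ℝ} (hx : x ≠ 0) :
    HasDerivAt (fun x => (x + 4 / α * x⁻¹) * exp (-α * x ^ 2 / 4))
      (-((1 + α * x ^ 2 / 2 + 4 / α * (x ^ 2)⁻¹) * exp (-α * x ^ 2 / 4))) x := by
  refine (((hasDerivAt_id' x).fun_add ((hasDerivAt_inv hx).const_mul (4 / α))).fun_mul
    (hasDerivAt_exp_neg_mul_sq_div_four α x)).congr_deriv ?_
  field_simp
  ring

theorem tendsto_rpow_mul_exp_neg_mul_sq_div_four_atTop (hα : 0 < α) (s : ℝ) :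
    Tendsto (fun x : ℝ => x ^ s * exp (-α * x ^ 2 / 4)) atTop (𝓝 0) := by
  refine (tendsto_rpow_mul_exp_neg_mul_sq_atTop (a := α / 4) (by positivity) s).congr fun x => ?_
  ring_nf

theorem two_mul_add_div_mul_inv_le (hα : 0 < α) (hα1 : α ≤ 1) {x : ℝ} (hx : 1 ≤ x) :
    2 * x + 4 / α * x⁻¹ ≤ 6 / α * x := by
  have hxinv : x⁻¹ ≤ x := (inv_le_one_of_one_le₀ hx).trans hx
  have hα' : 1 ≤ 1 / α := by rw [le_div_iff₀ hα]; linarith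
  calc 2 * x + 4 / α * x⁻¹ ≤ 2 * (1 / α) * x + 4 / α * x := by gcongr; linarith
    _ = 6 / α * x := by ring

theorem exists_tendsto_norm_sub_le_shrinker {E : Type*} [NormedAddCommGroup E] [NormedSpace ℝ E]
    [CompleteSpace E] (hα : 0 < α) (hα1 : α ≤ 1) (hβ : 0 ≤ β) (hc : 0 < c) {m b v : ℝ → E}
    (hm' : ∀ x, HasDerivAt m ((c * exp (α * x ^ 2 / 4)) • v x) x)
    (hb' : ∀ x, HasDerivAt b ((β * x / 2) • v x) x) (hm : ∀ x, ‖m x‖ ≤ 1) :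
    ∃ B, Tendsto b atTop (𝓝 B) ∧
      ∀ x, 1 ≤ x → ‖b x - B‖ ≤ 3 * β / (c * α) * x * exp (-α * x ^ 2 / 4) := by
  set e : ℝ → ℝ := fun x => exp (-α * x ^ 2 / 4)
  set C := β / (2 * c)
  have hC : 0 ≤ C := by positivity
  have hbρ (x : ℝ) : HasDerivAt b ((C * (x * e x)) • (c * exp (α * x ^ 2 / 4)) • v x) x := by
    refine (hb' x).congr_deriv ?_
    rw [smul_smul]
    congr 1
    simp only [C, e]
    field_simp
    rw [mul_assoc, ← exp_add, neg_add_cancel, exp_zero, mul_one]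
  -- The derivative of `(x + K / x) e(x)` is `-(α x² / 2 + α K / 2 - 1 + K / x²) e(x)`;
  -- `K = 4 / α` makes it dominate `|ρ'|`.
  have hρg (x : ℝ) : |C * ((1 - α * x ^ 2 / 2) * e x)|
      ≤ -(C * -((1 + α * x ^ 2 / 2 + 4 / α * (x ^ 2)⁻¹) * e x)) := by
    rw [mul_neg, neg_neg, abs_mul, abs_mul, abs_of_nonneg hC, abs_of_pos (exp_pos _)]
    have : 0 ≤ 4 / α * (x ^ 2)⁻¹ := by positivity
    gcongr
    rw [abs_le]
    constructor <;> nlinarith [sq_nonneg x]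
  have hdecay := tendsto_rpow_mul_exp_neg_mul_sq_div_four_atTop hα
  obtain ⟨B, hB, hbound⟩ := exists_tendsto_norm_sub_le_of_hasDerivAt_smul (a := 1) hm' hbρ hm
    (fun x _ => (hasDerivAt_mul_exp_neg_mul_sq_div_four α x).const_mul C)
    (fun x hx => (hasDerivAt_add_inv_mul_exp_neg_mul_sq_div_four hα
      (by linarith : (0 : ℝ) < x).ne').const_mul C)
    (fun x _ => hρg x) (by simpa [e] using (hdecay 1).const_mul C)
    (by simpa [e, add_mul, mul_assoc, rpow_neg_one] using
      ((hdecay 1).add ((hdecay (-1)).const_mul (4 / α))).const_mul C)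
  refine ⟨B, hB, fun x hx => (hbound x hx).trans ?_⟩
  rw [abs_of_nonneg (mul_nonneg hC (mul_nonneg (by linarith) (exp_pos _).le))]
  calc C * ((x + 4 / α * x⁻¹) * e x) + C * (x * e x) = C * (2 * x + 4 / α * x⁻¹) * e x := by ring
    _ ≤ C * (6 / α * x) * e x := by gcongr; exact two_mul_add_div_mul_inv_le hα hα1 hx
    _ = 3 * β / (c * α) * x * exp (-α * x ^ 2 / 4) := by
      simp only [C, e]
      field_simp
      ring

end Shrinker

theorem IsFrenetSolution.exists_tendsto_binormal_shrinker {E : Type*} [NormedAddCommGroup E]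
    [InnerProductSpace ℝ E] [CompleteSpace E] {α β c : ℝ} (hα : 0 < α) (hα1 : α ≤ 1)
    (hβ : 0 ≤ β) (hc : 0 < c) {m n b : ℝ → E}
    (h : IsFrenetSolution (fun x => c * exp (α * x ^ 2 / 4)) (fun x => -(β * x / 2)) m n b)
    (hframe : ∀ x, Orthonormal ℝ ![m x, n x, b x]) :
    ∃ B, Tendsto b atTop (𝓝 B) ∧ ‖B‖ = 1 ∧
      ∀ x, 1 ≤ x → |⟪m x, B⟫| ≤ 30 * β / (c * α ^ 2) * x * exp (-α * x ^ 2 / 4) := by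
  have hmnorm (x : ℝ) : ‖m x‖ = 1 := by simpa using (hframe x).1 0
  have hbnorm (x : ℝ) : ‖b x‖ = 1 := by simpa using (hframe x).1 2
  have hmb (x : ℝ) : ⟪m x, b x⟫ = 0 := by simpa using (hframe x).2 (by decide : (0 : Fin 3) ≠ 2)
  obtain ⟨B, hB, hbB⟩ := exists_tendsto_norm_sub_le_shrinker hα hα1 hβ hc h.hasDerivAt_m
    (fun x => by simpa using h.hasDerivAt_b x) (fun x => (hmnorm x).le)
  refine ⟨B, hB, tendsto_nhds_unique hB.norm (by simp [hbnorm]), fun x hx => ?_⟩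
  have hconst : 3 * β / (c * α) ≤ 30 * β / (c * α ^ 2) := by
    rw [div_le_div_iff₀ (by positivity) (by positivity)]
    nlinarith [mul_nonneg (mul_nonneg hβ hc.le) hα.le]
  calc |⟪m x, B⟫| = |⟪m x, B - b x⟫| := by rw [inner_sub_right, hmb, sub_zero]
    _ ≤ ‖b x - B‖ := by
      simpa [hmnorm, norm_sub_rev] using abs_real_inner_le_norm (m x) (B - b x)
    _ ≤ 3 * β / (c * α) * x * exp (-α * x ^ 2 / 4) := hbB x hx
    _ ≤ 30 * β / (c * α ^ 2) * x * exp (-α * x ^ 2 / 4) := by gcongr ?_ * _ * _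

section GreatCircle

variable {E : Type*} [NormedAddCommGroup E] [InnerProductSpace ℝ E]

theorem exists_norm_eq_one_inner_eq_zero [FiniteDimensional ℝ E] (hE : 2 ≤ finrank ℝ E)
    (B : E) : ∃ u : E, ‖u‖ = 1 ∧ ⟪u, B⟫ = 0 := by
  have hdim := (ℝ ∙ B).finrank_add_finrank_orthogonal
  have hB : finrank ℝ (ℝ ∙ B) ≤ 1 := by
    simpa using finrank_span_le_card ({B} : Set E)
  obtain ⟨v, hvB, hv⟩ := Submodule.exists_mem_ne_zero_of_ne_bot
    (Submodule.one_le_finrank_iff.mp (by omega) : (ℝ ∙ B)ᗮ ≠ ⊥)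
  refine ⟨(‖v‖⁻¹ : ℝ) • v, norm_smul_inv_norm hv, ?_⟩
  rw [real_inner_smul_left, Submodule.mem_orthogonal_singleton_iff_inner_left.mp hvB, mul_zero]

/-- Projecting `p` onto the plane `B^⊥` and normalising gives a point `u` of the great circle
with `⟪p, u⟫ ≥ 1 - ⟪p, B⟫²`, hence `‖p - u‖² = 2 - 2 ⟪p, u⟫ ≤ 2 ⟪p, B⟫²`. -/
theorem infDist_greatCircle_le [FiniteDimensional ℝ E] (hE : 2 ≤ finrank ℝ E) {p B : E}
    (hp : ‖p‖ = 1) (hB : ‖B‖ = 1) :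
    infDist p {q : E | ‖q‖ = 1 ∧ ⟪q, B⟫ = 0} ≤ √2 * |⟪p, B⟫| := by
  set t := ⟪p, B⟫
  set q := p - t • B
  have hqB : ⟪q, B⟫ = 0 := by
    simp [q, inner_sub_left, real_inner_smul_left, hB, t]
  have hpq : ⟪p, q⟫ = ‖q‖ ^ 2 := by
    have h := inner_sub_left (𝕜 := ℝ) p (t • B) q
    rw [real_inner_smul_left, real_inner_comm q B, hqB, mul_zero, sub_zero] at h
    rw [← real_inner_self_eq_norm_sq]
    exact h.symm
  have hq : ‖q‖ ^ 2 = 1 - t ^ 2 := by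
    rw [← hpq, inner_sub_right, real_inner_smul_right, real_inner_self_eq_norm_sq, hp]
    ring
  obtain ⟨u, hu, hpu⟩ :
      ∃ u ∈ {q : E | ‖q‖ = 1 ∧ ⟪q, B⟫ = 0}, 1 - t ^ 2 ≤ ⟪p, u⟫ := by
    by_cases hq0 : q = 0
    · obtain ⟨u, hu, huB⟩ := exists_norm_eq_one_inner_eq_zero hE B
      refine ⟨u, ⟨hu, huB⟩, ?_⟩
      have ht : t ^ 2 = 1 := by rw [hq0, norm_zero] at hq; linarith
      rw [sub_eq_zero.mp hq0, real_inner_smul_left, real_inner_comm, huB, ht]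
      simp
    · refine ⟨(‖q‖⁻¹ : ℝ) • q, ⟨norm_smul_inv_norm hq0, by
        rw [real_inner_smul_left, hqB, mul_zero]⟩, ?_⟩
      have hq1 : ‖q‖ ≤ 1 := by nlinarith [norm_nonneg q]
      rw [real_inner_smul_right, hpq, ← hq, pow_two, ← mul_assoc,
        inv_mul_cancel₀ (norm_ne_zero_iff.mpr hq0), one_mul]
      nlinarith [norm_nonneg q]
  refine (infDist_le_dist_of_mem hu).trans ?_
  have hdist : dist p u ^ 2 ≤ (√2 * |t|) ^ 2 := by
    rw [dist_eq_norm, @norm_sub_sq_real, hp, hu.1, mul_pow, sq_sqrt zero_le_two, sq_abs]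
    linarith
  exact le_of_sq_le_sq hdist (by positivity)

end GreatCircle

theorem stmt10 (α β c : ℝ) (hα : α ∈ Set.Ioc (0 : ℝ) 1) (hβ : β = Real.sqrt (1 - α ^ 2))
    (hc : 0 < c) (m n b : ℝ → E3)
    (hmdiff : Differentiable ℝ m) (hndiff : Differentiable ℝ n) (hbdiff : Differentiable ℝ b)
    (hm : ∀ x : ℝ, deriv m x = (c * Real.exp (α * x ^ 2 / 4)) • n x)
    (hn : ∀ x : ℝ, deriv n x
      = -((c * Real.exp (α * x ^ 2 / 4)) • m x) + (-(β * x / 2)) • b x)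
    (hb : ∀ x : ℝ, deriv b x = -((-(β * x / 2)) • n x))
    (hm0 : m 0 = EuclideanSpace.single (0 : Fin 3) (1 : ℝ))
    (hn0 : n 0 = EuclideanSpace.single (1 : Fin 3) (1 : ℝ))
    (hb0 : b 0 = EuclideanSpace.single (2 : Fin 3) (1 : ℝ)) :
    ∃ B : E3, Tendsto b atTop (nhds B) ∧ ‖B‖ = 1 ∧
      (∀ x : ℝ, 1 ≤ x →
        Metric.infDist (m x) {p : E3 | ‖p‖ = 1 ∧ ⟪p, B⟫ = 0}
          ≤ (30 * Real.sqrt 2 * β / (c * α ^ 2)) * x * Real.exp (-α * x ^ 2 / 4)) ∧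
      (∀ x : ℝ, x ≤ -1 →
        Metric.infDist (m x)
            {p : E3 | ‖p‖ = 1 ∧
              ⟪p, ((WithLp.equiv 2 (Fin 3 → ℝ)).symm ![-B 0, B 1, B 2] : E3)⟫ = 0}
          ≤ (30 * Real.sqrt 2 * β / (c * α ^ 2)) * |x| * Real.exp (-α * x ^ 2 / 4)) := by
  obtain ⟨hα0, hα1⟩ := hα
  have h : IsFrenetSolution (fun x => c * exp (α * x ^ 2 / 4)) (fun x => -(β * x / 2)) m n b :=
    ⟨fun x => (hmdiff x).hasDerivAt.congr_deriv (hm x),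
      fun x => (hndiff x).hasDerivAt.congr_deriv (hn x),
      fun x => (hbdiff x).hasDerivAt.congr_deriv (hb x)⟩
  have hframe (x : ℝ) : Orthonormal ℝ ![m x, n x, b x] := by
    have h0 : ![m 0, n 0, b 0] = EuclideanSpace.basisFun (Fin 3) ℝ := by
      ext i : 1
      fin_cases i <;> simp [hm0, hn0, hb0]
    exact h.orthonormal (h0 ▸ (EuclideanSpace.basisFun (Fin 3) ℝ).orthonormal) x
  obtain ⟨B, hB, hBnorm, hmB⟩ :=
    h.exists_tendsto_binormal_shrinker hα0 hα1 (hβ ▸ sqrt_nonneg _) hc hframe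
  have hmnorm (x : ℝ) : ‖m x‖ = 1 := by simpa using (hframe x).1 0
  have hbound (y : ℝ) (hy : 1 ≤ y) :
      √2 * |⟪m y, B⟫| ≤ 30 * √2 * β / (c * α ^ 2) * y * exp (-α * y ^ 2 / 4) :=
    calc √2 * |⟪m y, B⟫| ≤ √2 * (30 * β / (c * α ^ 2) * y * exp (-α * y ^ 2 / 4)) := by
          gcongr; exact hmB y hy
      _ = _ := by ring
  refine ⟨B, hB, hBnorm, fun x hx => ?_, fun x hx => ?_⟩
  · exact (infDist_greatCircle_le (by simp) (hmnorm x) hBnorm).trans (hbound x hx)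
  · rw [← firstCoordReflection_apply]
    refine (infDist_greatCircle_le (by simp) (hmnorm x)
      (by rw [LinearIsometryEquiv.norm_map, hBnorm])).trans ?_
    rw [h.apply_eq_neg_firstCoordReflection_apply_neg (by simp) (fun x => by ring) hm0 hn0 hb0 x,
      inner_neg_left, abs_neg, LinearIsometryEquiv.inner_map_map,
      abs_of_nonpos (by linarith : x ≤ 0), ← neg_sq x]
    exact hbound (-x) (by linarith)
end
end

section
/- Fix α ∈ (0,1], β = √(1−α²) and c > 0. Let (m, n, b) solve the Serret–Frenet system m' = k n, n' = −k m + τ b, b' = −τ n with k(x) = c·e^{α x²/4}, τ(x) = −βx/2, and initial conditions m(0) = (1,0,0), n(0) = (0,1,0), b(0) = (0,0,1), and let B₁ = B_{1,c,α} denote the first component of the limit lim_{x→∞} b(x). Then for all c > 0 and α ∈ (0,1], B₁² ≤ π β²/(c² α); equivalently |B_{1,c,α}| ≤ β√π/(c√α). -/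
/-! The first components `(m₁, n₁, b₁)` solve the scalar Frenet system, whose matrix is skew, so
`m₁² + n₁² + b₁² = 1` and `|m₁| ≤ 1`. Since `k = c e^{αx²/4}`, the equation `b₁' = -τ n₁` reads
`b₁' = φ m₁'` with `φ x = β/(2c) · x e^{-αx²/4}`. Integrating by parts bounds `|b₁ x|` by
`|φ x| + ∫₀^x |φ'|`, and `x e^{-αx²/4} + ∫₀^x |(s e^{-αs²/4})'| ds ≤ 2 ∫₀^x e^{-αs²/4} ds`,
which is at most `2√π/√α`. -/

noncomputable section

open Real MeasureTheory Filter

theorem sq_add_sq_add_sq_eq_of_hasDerivAt {f g h k τ : ℝ → ℝ}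
    (hf : ∀ x, HasDerivAt f (k x * g x) x)
    (hg : ∀ x, HasDerivAt g (-(k x * f x) + τ x * h x) x)
    (hh : ∀ x, HasDerivAt h (-(τ x * g x)) x) (x : ℝ) :
    f x ^ 2 + g x ^ 2 + h x ^ 2 = f 0 ^ 2 + g 0 ^ 2 + h 0 ^ 2 := by
  have hderiv : ∀ y, HasDerivAt (fun y => f y ^ 2 + g y ^ 2 + h y ^ 2) 0 y := fun y => by
    refine ((((hf y).pow 2).add ((hg y).pow 2)).add ((hh y).pow 2)).congr_deriv ?_
    simp only [Nat.cast_ofNat, Nat.add_one_sub_one, pow_one]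
    ring
  exact is_const_of_deriv_eq_zero (fun y => (hderiv y).differentiableAt)
    (fun y => (hderiv y).deriv) x 0

theorem abs_sub_le_of_hasDerivAt_eq_mul_deriv {f f' φ φ' h : ℝ → ℝ} {a b : ℝ} (hab : a ≤ b)
    (hf : ∀ x, HasDerivAt f (f' x) x) (hφ : ∀ x, HasDerivAt φ (φ' x) x)
    (hh : ∀ x, HasDerivAt h (φ x * f' x) x) (hφ'c : Continuous φ')
    (hf1 : ∀ x ∈ Set.Icc a b, |f x| ≤ 1) :
    |h b - h a| ≤ |φ a| + |φ b| + ∫ x in a..b, |φ' x| := by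
  have hfc : Continuous f := continuous_iff_continuousAt.2 fun x => (hf x).continuousAt
  have hH : ∀ x, HasDerivAt (fun y => h y - φ y * f y) (-(φ' x * f x)) x := fun x => by
    refine ((hh x).sub ((hφ x).mul (hf x))).congr_deriv ?_
    ring
  have hparts : h b - h a = φ b * f b - φ a * f a - ∫ x in a..b, φ' x * f x := by
    have := intervalIntegral.integral_eq_sub_of_hasDerivAt (fun x _ => hH x)
      ((hφ'c.mul hfc).neg.intervalIntegrable a b)
    rw [intervalIntegral.integral_neg] at this
    linarith
  have hint : |∫ x in a..b, φ' x * f x| ≤ ∫ x in a..b, |φ' x| := by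
    refine (intervalIntegral.abs_integral_le_integral_abs hab).trans
      (intervalIntegral.integral_mono_on hab ((hφ'c.mul hfc).abs.intervalIntegrable a b)
        (hφ'c.abs.intervalIntegrable a b) fun x hx => ?_)
    rw [abs_mul]
    exact mul_le_of_le_one_right (abs_nonneg _) (hf1 x hx)
  have hfa := hf1 a ⟨le_rfl, hab⟩
  have hfb := hf1 b ⟨hab, le_rfl⟩
  calc |h b - h a| ≤ |φ b| * |f b| + |φ a| * |f a| + |∫ x in a..b, φ' x * f x| := by
        rw [hparts, ← abs_mul, ← abs_mul]
        exact (abs_sub _ _).trans (add_le_add_left (abs_sub _ _) _)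
    _ ≤ |φ a| + |φ b| + ∫ x in a..b, |φ' x| := by
        nlinarith [abs_nonneg (φ a), abs_nonneg (φ b)]

theorem hasDerivAt_mul_exp_neg_mul_sq (a x : ℝ) :
    HasDerivAt (fun s => s * exp (-a * s ^ 2)) ((1 - 2 * a * x ^ 2) * exp (-a * x ^ 2)) x := by
  have hexp : HasDerivAt (fun s => exp (-a * s ^ 2)) (exp (-a * x ^ 2) * (-a * (2 * x))) x := by
    simpa using ((hasDerivAt_pow 2 x).const_mul (-a)).exp
  refine ((hasDerivAt_id x).mul hexp).congr_deriv ?_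
  simp only [id_eq]
  ring

theorem integral_exp_neg_mul_sq_le {a : ℝ} (ha : 0 < a) {x : ℝ} (hx : 0 ≤ x) :
    ∫ s in 0..x, exp (-a * s ^ 2) ≤ √(π / a) / 2 := by
  rw [intervalIntegral.integral_of_le hx, ← integral_gaussian_Ioi]
  exact setIntegral_mono_set (integrable_exp_neg_mul_sq ha).integrableOn
    (Eventually.of_forall fun s => (exp_pos _).le) Set.Ioc_subset_Ioi_self.eventuallyLE

theorem mul_exp_neg_mul_sq_add_integral_abs_deriv_le {a : ℝ} (ha : 0 < a) {x : ℝ} (hx : 0 ≤ x) :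
    x * exp (-a * x ^ 2) + ∫ s in 0..x, |(1 - 2 * a * s ^ 2) * exp (-a * s ^ 2)| ≤ √(π / a) := by
  have hE : Continuous fun s : ℝ => 2 * exp (-a * s ^ 2) := by fun_prop
  have hg : Continuous fun s : ℝ => (1 - 2 * a * s ^ 2) * exp (-a * s ^ 2) := by fun_prop
  have hFTC : ∫ s in 0..x, (1 - 2 * a * s ^ 2) * exp (-a * s ^ 2) = x * exp (-a * x ^ 2) := by
    simpa using intervalIntegral.integral_eq_sub_of_hasDerivAt
      (fun s _ => hasDerivAt_mul_exp_neg_mul_sq a s) (hg.intervalIntegrable 0 x)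
  have habs : ∫ s in 0..x, |(1 - 2 * a * s ^ 2) * exp (-a * s ^ 2)|
      ≤ ∫ s in 0..x, (2 * exp (-a * s ^ 2) - (1 - 2 * a * s ^ 2) * exp (-a * s ^ 2)) := by
    refine intervalIntegral.integral_mono_on hx (hg.abs.intervalIntegrable 0 x)
      ((hE.sub hg).intervalIntegrable 0 x) fun s _ => ?_
    rw [abs_mul, abs_of_pos (exp_pos _)]
    have : |1 - 2 * a * s ^ 2| ≤ 1 + 2 * a * s ^ 2 := by
      rw [abs_le]; constructor <;> nlinarith [mul_nonneg ha.le (sq_nonneg s)]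
    nlinarith [exp_pos (-a * s ^ 2)]
  rw [intervalIntegral.integral_sub (hE.intervalIntegrable 0 x)
    (hg.intervalIntegrable 0 x), intervalIntegral.integral_const_mul, hFTC] at habs
  linarith [integral_exp_neg_mul_sq_le ha hx]

theorem abs_le_of_hasDerivAt_frenet {α β c : ℝ} (hα : 0 < α) (hβ : 0 ≤ β) (hc : 0 < c)
    {f g h : ℝ → ℝ} (hf : ∀ x, HasDerivAt f (c * exp (α * x ^ 2 / 4) * g x) x)
    (hh : ∀ x, HasDerivAt h (β * x / 2 * g x) x) (hf1 : ∀ x, |f x| ≤ 1) (hh0 : h 0 = 0)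
    {x : ℝ} (hx : 0 ≤ x) : |h x| ≤ β * √π / (c * √α) := by
  set C := β / (2 * c) with hC
  have hC0 : 0 ≤ C := by positivity
  have hh' : ∀ s, HasDerivAt h
      (C * (s * exp (-(α / 4) * s ^ 2)) * (c * exp (α * s ^ 2 / 4) * g s)) s :=
    fun s => (hh s).congr_deriv <| by
      rw [show -(α / 4) * s ^ 2 = -(α * s ^ 2 / 4) by ring, exp_neg, hC]
      field_simp
  have hbound := abs_sub_le_of_hasDerivAt_eq_mul_deriv hx hf
    (fun s => (hasDerivAt_mul_exp_neg_mul_sq (α / 4) s).const_mul C) hh'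
    (by fun_prop) (fun s _ => hf1 s)
  have hsqrt : √(π / (α / 4)) = 2 * √π / √α := by
    rw [show π / (α / 4) = 2 ^ 2 * (π / α) by field_simp; norm_num, sqrt_mul (by positivity),
      sqrt_sq zero_le_two, sqrt_div pi_pos.le]
    ring
  calc |h x| ≤ C * (x * exp (-(α / 4) * x ^ 2)
        + ∫ s in 0..x, |(1 - 2 * (α / 4) * s ^ 2) * exp (-(α / 4) * s ^ 2)|) := by
        simpa [hh0, abs_mul, abs_of_nonneg hC0, abs_of_nonneg hx,
          intervalIntegral.integral_const_mul, mul_add] using hbound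
    _ ≤ C * √(π / (α / 4)) := mul_le_mul_of_nonneg_left
        (mul_exp_neg_mul_sq_add_integral_abs_deriv_le (by positivity) hx) hC0
    _ = β * √π / (c * √α) := by
        rw [hsqrt, hC]; field_simp

theorem stmt12 (α β c : ℝ) (hα : α ∈ Set.Ioc (0 : ℝ) 1) (hβ : β = Real.sqrt (1 - α ^ 2))
    (hc : 0 < c) (m n b : ℝ → E3)
    (hmdiff : Differentiable ℝ m) (hndiff : Differentiable ℝ n) (hbdiff : Differentiable ℝ b)
    (hm : ∀ x : ℝ, deriv m x = (c * Real.exp (α * x ^ 2 / 4)) • n x)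
    (hn : ∀ x : ℝ, deriv n x
      = -((c * Real.exp (α * x ^ 2 / 4)) • m x) + (-(β * x / 2)) • b x)
    (hb : ∀ x : ℝ, deriv b x = -((-(β * x / 2)) • n x))
    (hm0 : m 0 = EuclideanSpace.single (0 : Fin 3) (1 : ℝ))
    (hn0 : n 0 = EuclideanSpace.single (1 : Fin 3) (1 : ℝ))
    (hb0 : b 0 = EuclideanSpace.single (2 : Fin 3) (1 : ℝ))
    (B : E3) (hB : Tendsto b atTop (nhds B)) :
    (B 0) ^ 2 ≤ π * β ^ 2 / (c ^ 2 * α) ∧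
    |B 0| ≤ β * Real.sqrt π / (c * Real.sqrt α) := by
  have coord {v v' : ℝ → E3} (hv : Differentiable ℝ v) (hv' : ∀ x, deriv v x = v' x) (x : ℝ) :
      HasDerivAt (fun y => v y 0) (v' x 0) x :=
    hv' x ▸ ((EuclideanSpace.proj 0 : E3 →L[ℝ] ℝ).hasFDerivAt.comp_hasDerivAt x
      (hv x).hasDerivAt :)
  have hm1 := coord hmdiff hm
  have hn1 := coord hndiff hn
  have hb1 := coord hbdiff hb
  simp only [PiLp.add_apply, PiLp.neg_apply, PiLp.smul_apply, smul_eq_mul] at hm1 hn1 hb1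
  have hunit := sq_add_sq_add_sq_eq_of_hasDerivAt hm1 hn1 hb1
  norm_num [hm0, hn0, hb0, Fin.ext_iff] at hunit
  have hbound : ∀ x, 0 ≤ x → |b x 0| ≤ β * √π / (c * √α) := fun x hx =>
    abs_le_of_hasDerivAt_frenet hα.1 (hβ ▸ sqrt_nonneg _) hc hm1
      (fun y => (hb1 y).congr_deriv (by ring))
      (fun y => (sq_le_one_iff_abs_le_one _).1
        (by linarith [hunit y, sq_nonneg (n y 0), sq_nonneg (b y 0)]))
      (by simp [hb0]) hx
  have hlim : Tendsto (fun x => b x 0) atTop (nhds (B 0)) :=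
    ((EuclideanSpace.proj (0 : Fin 3)).continuous.tendsto B).comp hB
  have habs : |B 0| ≤ β * √π / (c * √α) :=
    le_of_tendsto hlim.abs (eventually_atTop.2 ⟨0, hbound⟩)
  refine ⟨?_, habs⟩
  calc B 0 ^ 2 = |B 0| ^ 2 := (sq_abs _).symm
    _ ≤ (β * √π / (c * √α)) ^ 2 := pow_le_pow_left₀ (abs_nonneg _) habs 2
    _ = π * β ^ 2 / (c ^ 2 * α) := by
        rw [div_pow, mul_pow, mul_pow, sq_sqrt pi_pos.le, sq_sqrt hα.1.le]; ring
end
end
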